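/- arXiv:1406.4012 — 8 statements merged into one kernel-verified Lean document; each statement's English description precedes it below -/
import Mathlib

section
/- Let M_1, M_2, ..., M_k (k ≥ 2) be closed linear subspaces of a real Hilbert space X and let M := ⋂_{l=1}^k M_l. Then for every x ∈ X, the iterates of cyclic alternating projections converge strongly to the projection of x onto M: lim_{n→∞} ‖(P_{M_k} P_{M_{k-1}} ··· P_{M_1})^n x − P_M x‖ = 0. -/
/-!
The cyclic product `T = P_{M_k} ⋯ P_{M_1}` is an averaged contraction: each projection satisfies
`‖y - P y‖² = ‖y‖² - ‖P y‖²`, and an inequality of the form `‖y - T y‖² ≤ C (‖y‖² - ‖T y‖²)`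
survives composition (with a worse constant). Along an orbit the squared norms decrease to a limit,
so `T^[n] (T y - y) → 0`. Since the iterates are contractions, this extends to the closure of the
range of `T - 1`, which is the orthogonal complement of the fixed space of `T`, and the fixed space
of `T` is `⋂ M_l`. Hence `T^[n] x = T^[n] (x - P_M x) + P_M x → P_M x`.
-/

open Filter Topology

section

variable {E : Type*} [NormedAddCommGroup E] [InnerProductSpace ℝ E]

/-- For linear maps this is averagedness in the sense of Baillon–Bruck–Reich:
`T` is `α`-averaged iff `T.IsAveraged (α / (1 - α))`. -/
structure ContinuousLinearMap.IsAveraged (T : E →L[ℝ] E) (C : ℝ) : Prop where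
  pos : 0 < C
  norm_sub_sq_le (y : E) : ‖y - T y‖ ^ 2 ≤ C * (‖y‖ ^ 2 - ‖T y‖ ^ 2)

theorem Submodule.isAveraged_starProjection (K : Submodule ℝ E) [K.HasOrthogonalProjection] :
    K.starProjection.IsAveraged 1 where
  pos := one_pos
  norm_sub_sq_le y := by
    rw [← starProjection_orthogonal_val, norm_sq_eq_add_norm_sq_starProjection y K]
    linarith

theorem ContinuousLinearMap.isClosed_setOf_tendsto_iterate_zero {T : E →L[ℝ] E}
    (hT : ∀ y, ‖T y‖ ≤ ‖y‖) : IsClosed {y | Tendsto (fun n => T^[n] y) atTop (𝓝 0)} := by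
  have hlip : LipschitzWith 1 T :=
    lipschitzWith_of_opNorm_le (T.opNorm_le_bound zero_le_one fun y => by simpa using hT y)
  have hequi : UniformEquicontinuous fun n => T^[n] :=
    LipschitzWith.uniformEquicontinuous _ 1 fun n => by simpa using hlip.iterate n
  exact hequi.equicontinuous.isClosed_setOfPred_tendsto continuous_const

theorem ContinuousLinearMap.orthogonal_le_closure_range_sub_one [CompleteSpace E]
    {T : E →L[ℝ] E} (hT : ∀ y, ‖T y‖ ≤ ‖y‖) {K : Submodule ℝ E} (hK : ∀ y, T y = y → y ∈ K) :
    Kᗮ ≤ (LinearMap.range ((T - 1 : E →L[ℝ] E) : E →ₗ[ℝ] E)).topologicalClosure := by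
  rw [← Submodule.orthogonal_orthogonal_eq_closure]
  refine Submodule.orthogonal_le fun u hu => hK u ?_
  -- `u ⊥ (T - 1) u` gives `⟪T u, u⟫ = ‖u‖²`, which together with `‖T u‖ ≤ ‖u‖` forces `T u = u`.
  refine eq_of_norm_le_re_inner_eq_norm_sq (𝕜 := ℝ) (hT u) ?_
  have hinner : inner ℝ ((T - 1) u) u = 0 :=
    Submodule.inner_right_of_mem_orthogonal (LinearMap.mem_range_self _ u) hu
  rw [sub_apply, one_apply_eq_self, inner_sub_left, sub_eq_zero] at hinner
  simp [hinner]

namespace ContinuousLinearMap.IsAveraged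

variable {S T : E →L[ℝ] E} {C D : ℝ}

theorem norm_sq_apply_le (hT : T.IsAveraged C) (y : E) : ‖T y‖ ^ 2 ≤ ‖y‖ ^ 2 := by
  have h := hT.norm_sub_sq_le y
  have := (mul_nonneg_iff_of_pos_left hT.pos).mp ((sq_nonneg _).trans h)
  linarith

theorem norm_apply_le (hT : T.IsAveraged C) (y : E) : ‖T y‖ ≤ ‖y‖ :=
  (pow_le_pow_iff_left₀ (norm_nonneg _) (norm_nonneg _) two_ne_zero).mp (hT.norm_sq_apply_le y)

theorem apply_eq_self_of_norm_eq (hT : T.IsAveraged C) {y : E} (h : ‖T y‖ = ‖y‖) : T y = y := by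
  have hsq := hT.norm_sub_sq_le y
  rw [h, sub_self, mul_zero] at hsq
  have : ‖y - T y‖ = 0 := pow_eq_zero_iff two_ne_zero |>.mp (le_antisymm hsq (sq_nonneg _))
  exact (sub_eq_zero.mp (norm_eq_zero.mp this)).symm

theorem comp (hS : S.IsAveraged C) (hT : T.IsAveraged D) : (S ∘L T).IsAveraged (2 * (C + D)) where
  pos := by linarith [hS.pos, hT.pos]
  norm_sub_sq_le y := by
    have hT' := hT.norm_sub_sq_le y
    have hS' := hS.norm_sub_sq_le (T y)
    have hTle := hT.norm_sq_apply_le y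
    have hSle := hS.norm_sq_apply_le (T y)
    calc ‖y - S (T y)‖ ^ 2 ≤ (‖y - T y‖ + ‖T y - S (T y)‖) ^ 2 := by
          gcongr; exact norm_sub_le_norm_sub_add_norm_sub _ _ _
      _ ≤ 2 * (‖y - T y‖ ^ 2 + ‖T y - S (T y)‖ ^ 2) := add_sq_le
      _ ≤ 2 * (C + D) * (‖y‖ ^ 2 - ‖S (T y)‖ ^ 2) := by nlinarith [hS.pos, hT.pos]

theorem apply_eq_self_of_comp_apply_eq_self (hT : T.IsAveraged D) (hS : ∀ z, ‖S z‖ ≤ ‖z‖)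
    {y : E} (h : S (T y) = y) : T y = y :=
  hT.apply_eq_self_of_norm_eq <| le_antisymm (hT.norm_apply_le y) (by simpa only [h] using hS (T y))

theorem tendsto_iterate_apply_sub_self (hT : T.IsAveraged C) (y : E) :
    Tendsto (fun n => T^[n] (T y - y)) atTop (𝓝 0) := by
  set a : ℕ → ℝ := fun n => ‖T^[n] y‖ ^ 2
  have hstep : ∀ n, ‖T^[n] (T y - y)‖ ^ 2 ≤ C * (a n - a (n + 1)) := fun n => by
    simpa only [a, iterate_map_sub, ← Function.iterate_succ_apply, Function.iterate_succ_apply',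
      norm_sub_rev] using hT.norm_sub_sq_le (T^[n] y)
  have hanti : Antitone a := antitone_nat_of_succ_le fun n => by
    simpa only [a, Function.iterate_succ_apply'] using hT.norm_sq_apply_le (T^[n] y)
  have hlim : Tendsto a atTop (𝓝 (⨅ n, a n)) :=
    tendsto_atTop_ciInf hanti ⟨0, by rintro _ ⟨n, rfl⟩; positivity⟩
  have hdiff : Tendsto (fun n => C * (a n - a (n + 1))) atTop (𝓝 0) := by
    simpa using (hlim.sub (hlim.comp (tendsto_add_atTop_nat 1))).const_mul C
  have hsq : Tendsto (fun n => ‖T^[n] (T y - y)‖ ^ 2) atTop (𝓝 0) :=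
    squeeze_zero (fun n => sq_nonneg _) hstep hdiff
  rw [tendsto_zero_iff_norm_tendsto_zero]
  simpa [Real.sqrt_sq (norm_nonneg _)] using hsq.sqrt

theorem tendsto_iterate_apply [CompleteSpace E] (hT : T.IsAveraged C) (K : Submodule ℝ E)
    [K.HasOrthogonalProjection] (hK : ∀ y, T y = y ↔ y ∈ K) (x : E) :
    Tendsto (fun n => T^[n] x) atTop (𝓝 (K.starProjection x)) := by
  set p := K.starProjection x
  have hdecomp : ∀ n, T^[n] x = T^[n] (x - p) + p := fun n => by
    rw [iterate_map_sub, Function.iterate_fixed ((hK p).mpr (K.starProjection_apply_mem x)),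
      sub_add_cancel]
  suffices Tendsto (fun n => T^[n] (x - p)) atTop (𝓝 0) by
    simpa only [zero_add, ← hdecomp] using this.add_const p
  have hdense : x - p ∈ (LinearMap.range ((T - 1 : E →L[ℝ] E) : E →ₗ[ℝ] E)).topologicalClosure :=
    orthogonal_le_closure_range_sub_one hT.norm_apply_le (fun y => (hK y).mp)
      (K.sub_starProjection_mem_orthogonal x)
  refine closure_minimal ?_ (isClosed_setOf_tendsto_iterate_zero hT.norm_apply_le) hdense
  rintro _ ⟨y, rfl⟩
  simpa using hT.tendsto_iterate_apply_sub_self y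

end ContinuousLinearMap.IsAveraged

variable {ι : Type*} (M : ι → Submodule ℝ E) [∀ i, (M i).HasOrthogonalProjection]

/-- `starProjectionComp M [i₁, …, iₘ] = P_{M iₘ} ∘ ⋯ ∘ P_{M i₁}`: the head of the list acts first. -/
noncomputable def starProjectionComp : List ι → E →L[ℝ] E
  | [] => 1
  | i :: L => starProjectionComp L ∘L (M i).starProjection

theorem starProjectionComp_apply (L : List ι) (y : E) :
    starProjectionComp M L y = L.foldl (fun z i => (M i).starProjection z) y := by
  induction L generalizing y with
  | nil => rfl
  | cons i L ih => exact ih _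

theorem isAveraged_starProjectionComp (L : List ι) :
    ∃ C, (starProjectionComp M L).IsAveraged C := by
  induction L with
  | nil => exact ⟨1, one_pos, fun y => by simp [starProjectionComp]⟩
  | cons i L ih =>
    obtain ⟨C, hC⟩ := ih
    exact ⟨_, hC.comp (M i).isAveraged_starProjection⟩

theorem starProjectionComp_apply_eq_self_iff (L : List ι) (y : E) :
    starProjectionComp M L y = y ↔ ∀ i ∈ L, y ∈ M i := by
  induction L with
  | nil => simp [starProjectionComp]
  | cons i L ih =>
    obtain ⟨C, hC⟩ := isAveraged_starProjectionComp M L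
    have hP : (M i).starProjection y = y ↔ y ∈ M i := Submodule.starProjection_eq_self_iff
    simp only [starProjectionComp, ContinuousLinearMap.comp_apply, List.forall_mem_cons, ← hP]
    constructor
    · intro h
      have hPy := (M i).isAveraged_starProjection.apply_eq_self_of_comp_apply_eq_self
        hC.norm_apply_le h
      exact ⟨hPy, ih.mp (by rwa [hPy] at h)⟩
    · rintro ⟨hPy, hL⟩
      rw [hPy, ih.mpr hL]

end

theorem alternating_projections_strong_convergence_general
    {X : Type*} [NormedAddCommGroup X] [InnerProductSpace ℝ X] [CompleteSpace X]
    {k : ℕ} (M : Fin k → Submodule ℝ X)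
    [∀ l, CompleteSpace (M l)] [CompleteSpace (⨅ l, M l : Submodule ℝ X)]
    (x : X) :
    Tendsto
      (fun n : ℕ =>
        ‖(fun y : X =>
            (List.finRange k).foldl
              (fun z l => (Submodule.orthogonalProjectionOnto (M l) z : X)) y)^[n] x -
          (Submodule.orthogonalProjectionOnto (⨅ l, M l : Submodule ℝ X) x : X)‖)
      atTop (nhds 0) := by
  set T := starProjectionComp M (List.finRange k)
  obtain ⟨C, hT⟩ := isAveraged_starProjectionComp M (List.finRange k)
  have hfix : ∀ y, T y = y ↔ y ∈ ⨅ l, M l := fun y => by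
    simp [T, starProjectionComp_apply_eq_self_iff, Submodule.mem_iInf]
  have hT_eq : ⇑T = fun y => (List.finRange k).foldl
      (fun z l => (Submodule.orthogonalProjectionOnto (M l) z : X)) y :=
    funext (starProjectionComp_apply M _)
  rw [← hT_eq]
  exact tendsto_iff_norm_sub_tendsto_zero.mp (hT.tendsto_iterate_apply _ hfix x)

/-- von Neumann–Halperin: for closed linear subspaces
`M 0, …, M (k-1)` (`k ≥ 2`) of a real Hilbert space `X` with intersection
`⨅ l, M l`, the iterates of cyclic alternating projections converge strongly
to the orthogonal projection onto the intersection: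
`‖(P_{M_{k-1}} ∘ ⋯ ∘ P_{M_0})^[n] x - P_{⨅ l, M l} x‖ → 0`. -/
theorem alternating_projections_strong_convergence
    {X : Type*} [NormedAddCommGroup X] [InnerProductSpace ℝ X] [CompleteSpace X]
    {k : ℕ} (hk : 2 ≤ k) (M : Fin k → Submodule ℝ X)
    [∀ l, CompleteSpace (M l)] [CompleteSpace (⨅ l, M l : Submodule ℝ X)]
    (x : X) :
    Tendsto
      (fun n : ℕ =>
        ‖(fun y : X =>
            (List.finRange k).foldl
              (fun z l => (Submodule.orthogonalProjectionOnto (M l) z : X)) y)^[n] x -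
          (Submodule.orthogonalProjectionOnto (⨅ l, M l : Submodule ℝ X) x : X)‖)
      atTop (nhds 0) :=
  alternating_projections_strong_convergence_general M x
end

section
/- Let M_1 and M_2 be closed linear subspaces of a real Hilbert space X. Suppose x ∈ M_1, x′ = P_{M_2}(x), x″ = P_{M_1}(x′), and x ≠ x″. Define x⁺ := x + (‖x − x′‖²/‖x − x″‖²)(x″ − x) and the hyperplane H := {x̃ ∈ X : ⟨x − x″, x̃⟩ = ⟨x − x″, x⁺⟩}. Then M_1 ∩ M_2 ⊆ H, and the normal vector x − x″ of H satisfies x − x″ ∈ M_1. -/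
open scoped RealInnerProductSpace

/-!
Write `x' = P₂ x` and `x'' = P₁ x'`. For `y ∈ M₁ ∩ M₂`, the vector `x' - x''` is orthogonal to
`x - y ∈ M₁`, and `x - x'` is orthogonal to `x' - y ∈ M₂`; hence
`⟪x - x'', x - y⟫ = ⟪x - x', x - y⟫ = ‖x - x'‖²`. So `x⁺` is the step from `x` along the normal
`x - x''` that lands on the hyperplane through `y`, and this hyperplane does not depend on `y`.
-/

theorem inner_sub_div_norm_sq_smul_self {E : Type*} [NormedAddCommGroup E]
    [InnerProductSpace ℝ E] (v x y : E) :
    ⟪v, x - (⟪v, x - y⟫ / ‖v‖ ^ 2) • v⟫ = ⟪v, y⟫ := by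
  rcases eq_or_ne v 0 with rfl | hv
  · simp
  · rw [inner_sub_right, real_inner_smul_right, real_inner_self_eq_norm_sq,
      div_mul_cancel₀ _ (by positivity), inner_sub_right]
    ring

theorem inner_sub_starProjection_starProjection_sub {E : Type*} [NormedAddCommGroup E]
    [InnerProductSpace ℝ E] (K₁ K₂ : Submodule ℝ E) [K₁.HasOrthogonalProjection]
    [K₂.HasOrthogonalProjection] {x y : E} (hx : x ∈ K₁) (hy₁ : y ∈ K₁) (hy₂ : y ∈ K₂) :
    ⟪x - K₁.starProjection (K₂.starProjection x), x - y⟫ = ‖x - K₂.starProjection x‖ ^ 2 := by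
  set x' := K₂.starProjection x
  have h₁ : ⟪x' - K₁.starProjection x', x - y⟫ = 0 :=
    K₁.starProjection_inner_eq_zero x' _ (K₁.sub_mem hx hy₁)
  have h₂ : ⟪x - x', x' - y⟫ = 0 :=
    K₂.starProjection_inner_eq_zero x _ (K₂.sub_mem (K₂.starProjection_apply_mem x) hy₂)
  calc ⟪x - K₁.starProjection x', x - y⟫
      = ⟪x - x', (x - x') + (x' - y)⟫ + ⟪x' - K₁.starProjection x', x - y⟫ := by
        rw [sub_add_sub_cancel, ← inner_add_left, sub_add_sub_cancel]
    _ = ‖x - x'‖ ^ 2 := by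
        rw [h₁, inner_add_right, h₂, real_inner_self_eq_norm_sq, add_zero, add_zero]

theorem hyperplane_contains_intersection_general
    {X : Type*} [NormedAddCommGroup X] [InnerProductSpace ℝ X]
    (M₁ M₂ : Submodule ℝ X) [CompleteSpace M₁] [CompleteSpace M₂]
    (x x' x'' xplus : X) (hx : x ∈ M₁)
    (hx' : x' = (Submodule.orthogonalProjectionOnto M₂ x : X))
    (hx'' : x'' = (Submodule.orthogonalProjectionOnto M₁ x' : X))
    (hxplus : xplus = x + (‖x - x'‖ ^ 2 / ‖x - x''‖ ^ 2) • (x'' - x)) :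
    ((M₁ : Set X) ∩ (M₂ : Set X)) ⊆
        {y : X | ⟪x - x'', y⟫ = ⟪x - x'', xplus⟫} ∧
      x - x'' ∈ M₁ := by
  rw [← Submodule.starProjection_apply] at hx' hx''
  subst hx' hx'' hxplus
  refine ⟨fun y ⟨hy₁, hy₂⟩ => ?_, M₁.sub_mem hx (M₁.starProjection_apply_mem _)⟩
  rw [Set.mem_ofPred_eq, ← neg_sub x, smul_neg, ← sub_eq_add_neg,
    ← inner_sub_starProjection_starProjection_sub M₁ M₂ hx hy₁ hy₂,
    inner_sub_div_norm_sq_smul_self]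

/-- for closed subspaces `M₁, M₂`, `x ∈ M₁`, `x' = P_{M₂} x`,
`x'' = P_{M₁} x'`, `x ≠ x''`, the hyperplane
`H = {x̃ : ⟪x - x'', x̃⟫ = ⟪x - x'', x⁺⟫}` with
`x⁺ = x + (‖x - x'‖²/‖x - x''‖²)(x'' - x)` contains `M₁ ∩ M₂`, and its normal
vector `x - x''` lies in `M₁`. -/
theorem hyperplane_contains_intersection
    {X : Type*} [NormedAddCommGroup X] [InnerProductSpace ℝ X] [CompleteSpace X]
    (M₁ M₂ : Submodule ℝ X) [CompleteSpace M₁] [CompleteSpace M₂]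
    (x x' x'' xplus : X) (hx : x ∈ M₁)
    (hx' : x' = (Submodule.orthogonalProjectionOnto M₂ x : X))
    (hx'' : x'' = (Submodule.orthogonalProjectionOnto M₁ x' : X))
    (hne : x ≠ x'')
    (hxplus : xplus = x + (‖x - x'‖ ^ 2 / ‖x - x''‖ ^ 2) • (x'' - x)) :
    ((M₁ : Set X) ∩ (M₂ : Set X)) ⊆
        {y : X | ⟪x - x'', y⟫ = ⟪x - x'', xplus⟫} ∧
      x - x'' ∈ M₁ :=
  hyperplane_contains_intersection_general M₁ M₂ x x' x'' xplus hx hx' hx'' hxplus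
end

section
/- Let X be a real Hilbert space and let x, x′, x″ ∈ X satisfy ⟨x′ − x″, x − x″⟩ = 0 and x ≠ x″. Define the hyperplanes H′ := {x̃ ∈ X : ⟨x − x′, x̃ − x′⟩ = 0} and H″ := {x̃ ∈ X : ⟨x′ − x″, x̃ − x″⟩ = 0}, and set x⁺ := x + (‖x − x′‖²/‖x − x″‖²)(x″ − x). Then x⁺ ∈ H′ ∩ H″ and x⁺ is the point of the closed affine subspace H′ ∩ H″ nearest to x″, i.e. x⁺ is the orthogonal projection of x″ onto H′ ∩ H″. -/
/-!
Every point of the line through `x` and `x''` lies in `H''`, and since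
`⟪x - x', x - x''⟫ = ‖x - x''‖²` the parameter of `x⁺` is the one at which this line meets `H'`.
Moreover `x'' - x⁺` is a multiple of `x - x'' = (x - x') + (x' - x'')`, the sum of the normals of
`H'` and `H''`, hence orthogonal to `x⁺ - y` for every `y ∈ H' ∩ H''`; Pythagoras concludes.
-/

open scoped RealInnerProductSpace

section
variable {X : Type*} [NormedAddCommGroup X] [InnerProductSpace ℝ X]

theorem norm_sub_le_norm_sub_of_inner_sub_eq_zero {v p y : X} (h : ⟪v - p, p - y⟫ = 0) :
    ‖v - p‖ ≤ ‖v - y‖ := by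
  have pythagoras : ‖v - y‖ * ‖v - y‖ = ‖v - p‖ * ‖v - p‖ + ‖p - y‖ * ‖p - y‖ := by
    rw [← sub_add_sub_cancel v p y]
    exact norm_add_sq_eq_norm_sq_add_norm_sq_real h
  rw [mul_self_le_mul_self_iff (norm_nonneg _) (norm_nonneg _), pythagoras]
  exact le_add_of_nonneg_right (mul_self_nonneg _)

theorem inner_sub_eq_zero_of_inner_sub_eq_zero {n a p y : X} (hp : ⟪n, p - a⟫ = 0)
    (hy : ⟪n, y - a⟫ = 0) : ⟪n, p - y⟫ = 0 := by
  rw [← sub_sub_sub_cancel_right p y a, inner_sub_right, hp, hy, sub_zero]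

theorem norm_sub_le_of_sub_eq_smul_add_normals {n₁ n₂ a₁ a₂ v p y : X} {c : ℝ}
    (hvp : v - p = c • (n₁ + n₂)) (hp₁ : ⟪n₁, p - a₁⟫ = 0) (hp₂ : ⟪n₂, p - a₂⟫ = 0)
    (hy₁ : ⟪n₁, y - a₁⟫ = 0) (hy₂ : ⟪n₂, y - a₂⟫ = 0) : ‖v - p‖ ≤ ‖v - y‖ := by
  apply norm_sub_le_norm_sub_of_inner_sub_eq_zero
  rw [hvp, real_inner_smul_left, inner_add_left, inner_sub_eq_zero_of_inner_sub_eq_zero hp₁ hy₁,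
    inner_sub_eq_zero_of_inner_sub_eq_zero hp₂ hy₂, add_zero, mul_zero]

variable {x x' x'' : X}

theorem inner_sub_sub_eq_norm_sq_of_inner_eq_zero (h : ⟪x' - x'', x - x''⟫ = 0) :
    ⟪x - x', x - x''⟫ = ‖x - x''‖ ^ 2 := by
  rw [show x - x' = (x - x'') - (x' - x'') by abel, inner_sub_left, h, sub_zero,
    real_inner_self_eq_norm_sq]

theorem inner_add_smul_sub_sub_eq_zero (h : ⟪x' - x'', x - x''⟫ = 0) (t : ℝ) :
    ⟪x' - x'', x + t • (x'' - x) - x''⟫ = 0 := by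
  rw [show x + t • (x'' - x) - x'' = (1 - t) • (x - x'') by module, real_inner_smul_right, h,
    mul_zero]

theorem inner_add_div_smul_sub_sub_eq_zero (h : ⟪x' - x'', x - x''⟫ = 0) (hne : x ≠ x'') :
    ⟪x - x', x + (‖x - x'‖ ^ 2 / ‖x - x''‖ ^ 2) • (x'' - x) - x'⟫ = 0 := by
  have hsq : ‖x - x''‖ ^ 2 ≠ 0 := by simpa [sub_eq_zero] using hne
  rw [show ∀ t : ℝ, x + t • (x'' - x) - x' = (x - x') - t • (x - x'') from fun t => by module,
    inner_sub_right, real_inner_smul_right, inner_sub_sub_eq_norm_sq_of_inner_eq_zero h,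
    real_inner_self_eq_norm_sq, div_mul_cancel₀ _ hsq, sub_self]

end

theorem proj_onto_intersection_of_two_hyperplanes_general
    {X : Type*} [NormedAddCommGroup X] [InnerProductSpace ℝ X]
    (x x' x'' xplus : X)
    (horth : ⟪x' - x'', x - x''⟫ = 0) (hne : x ≠ x'')
    (hxplus : xplus = x + (‖x - x'‖ ^ 2 / ‖x - x''‖ ^ 2) • (x'' - x)) :
    xplus ∈ ({y : X | ⟪x - x', y - x'⟫ = 0} ∩ {y : X | ⟪x' - x'', y - x''⟫ = 0}) ∧
      ∀ y ∈ ({y : X | ⟪x - x', y - x'⟫ = 0} ∩ {y : X | ⟪x' - x'', y - x''⟫ = 0}),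
        ‖x'' - xplus‖ ≤ ‖x'' - y‖ := by
  have hH' : ⟪x - x', xplus - x'⟫ = 0 := hxplus ▸ inner_add_div_smul_sub_sub_eq_zero horth hne
  have hH'' : ⟪x' - x'', xplus - x''⟫ = 0 := hxplus ▸ inner_add_smul_sub_sub_eq_zero horth _
  have hdir : x'' - xplus = (‖x - x'‖ ^ 2 / ‖x - x''‖ ^ 2 - 1) • ((x - x') + (x' - x'')) := by
    rw [hxplus]; module
  exact ⟨⟨hH', hH''⟩, fun y ⟨hy', hy''⟩ =>
    norm_sub_le_of_sub_eq_smul_add_normals hdir hH' hH'' hy' hy''⟩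

/-- if `⟪x' - x'', x - x''⟫ = 0` and `x ≠ x''`, then
`x⁺ = x + (‖x - x'‖²/‖x - x''‖²)(x'' - x)` lies in `H' ∩ H''`, where
`H' = {x̃ : ⟪x - x', x̃ - x'⟫ = 0}` and `H'' = {x̃ : ⟪x' - x'', x̃ - x''⟫ = 0}`,
and `x⁺` is the nearest point of `H' ∩ H''` to `x''`, i.e. the orthogonal
projection of `x''` onto the closed affine subspace `H' ∩ H''`. -/
theorem proj_onto_intersection_of_two_hyperplanes
    {X : Type*} [NormedAddCommGroup X] [InnerProductSpace ℝ X] [CompleteSpace X]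
    (x x' x'' xplus : X)
    (horth : ⟪x' - x'', x - x''⟫ = 0) (hne : x ≠ x'')
    (hxplus : xplus = x + (‖x - x'‖ ^ 2 / ‖x - x''‖ ^ 2) • (x'' - x)) :
    xplus ∈ ({y : X | ⟪x - x', y - x'⟫ = 0} ∩ {y : X | ⟪x' - x'', y - x''⟫ = 0}) ∧
      ∀ y ∈ ({y : X | ⟪x - x', y - x'⟫ = 0} ∩ {y : X | ⟪x' - x'', y - x''⟫ = 0}),
        ‖x'' - xplus‖ ≤ ‖x'' - y‖ :=
  proj_onto_intersection_of_two_hyperplanes_general x x' x'' xplus horth hne hxplus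
end

section
/- Let {a_j}_{j≥1} be a sequence of nonnegative real numbers such that ∑_{j=1}^∞ a_j² converges. Then there is a strictly increasing sequence of indices {j_t}_t such that the sequence {∑_{s=1}^{j_t} a_s · a_{j_t}}_t converges to zero. -/
/-!
By Cauchy–Schwarz, `(∑_{s ≤ m} a s)² ≤ (m + 1) ∑' s, a s²`, so the square of the product is at
most `(∑' s, a s²) · (m + 1) a_m²`. It remains to see that `(m + 1) a_m² → 0` along a subsequence:
otherwise `a_m² ≥ ε / (m + 1)` for all large `m`, and the harmonic series would converge.
-/

open Filter Topology

theorem sq_sum_range_le_mul_tsum {a : ℕ → ℝ} (h : Summable fun j => a j ^ 2) (n : ℕ) :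
    (∑ s ∈ Finset.range n, a s) ^ 2 ≤ n * ∑' s, a s ^ 2 := by
  calc (∑ s ∈ Finset.range n, a s) ^ 2
      ≤ (Finset.range n).card * ∑ s ∈ Finset.range n, a s ^ 2 := sq_sum_le_card_mul_sum_sq
    _ ≤ n * ∑' s, a s ^ 2 := by
      rw [Finset.card_range]
      gcongr
      exact h.sum_le_tsum _ fun s _ => sq_nonneg (a s)

theorem Summable.frequently_succ_mul_lt {c : ℕ → ℝ} (hc : Summable c) {ε : ℝ} (hε : 0 < ε) :
    ∃ᶠ m : ℕ in atTop, ((m : ℝ) + 1) * c m < ε := by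
  intro hge
  have hharmonic : Summable fun m : ℕ => 1 / ((m : ℝ) + 1) := by
    refine (hc.div_const ε).of_norm_bounded_eventually_nat ?_
    filter_upwards [hge] with m hm
    rw [Real.norm_of_nonneg (by positivity), div_le_div_iff₀ (by positivity) hε]
    linarith [not_lt.mp hm]
  exact Real.not_summable_one_div_natCast
    ((summable_nat_add_iff 1).mp (by exact_mod_cast hharmonic))

theorem Summable.exists_strictMono_tendsto_succ_mul {c : ℕ → ℝ} (hc0 : ∀ m, 0 ≤ c m)
    (hc : Summable c) :
    ∃ φ : ℕ → ℕ, StrictMono φ ∧ Tendsto (fun t => ((φ t : ℝ) + 1) * c (φ t)) atTop (𝓝 0) := by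
  obtain ⟨φ, hφ, hlt⟩ := extraction_forall_of_frequently
    (P := fun n m => ((m : ℝ) + 1) * c m < 1 / ((n : ℝ) + 1))
    fun n => hc.frequently_succ_mul_lt Nat.one_div_pos_of_nat
  exact ⟨φ, hφ, squeeze_zero (fun t => by have := hc0 (φ t); positivity)
    (fun t => (hlt t).le) tendsto_one_div_add_atTop_nhds_zero_nat⟩

theorem sum_of_squares_subsequence_general
    (a : ℕ → ℝ) (hsum : Summable (fun j => (a j) ^ 2)) :
    ∃ j : ℕ → ℕ, StrictMono j ∧
      Tendsto (fun t => (∑ s ∈ Finset.range (j t + 1), a s) * a (j t))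
        atTop (nhds 0) := by
  obtain ⟨j, hj, hlim⟩ := hsum.exists_strictMono_tendsto_succ_mul fun m => sq_nonneg (a m)
  have hbound := (hlim.const_mul (∑' s, a s ^ 2)).sqrt
  rw [mul_zero, Real.sqrt_zero] at hbound
  refine ⟨j, hj, squeeze_zero_norm (fun t => ?_) hbound⟩
  set m := j t
  rw [Real.norm_eq_abs, ← Real.sqrt_sq_eq_abs]
  refine Real.sqrt_le_sqrt ?_
  calc ((∑ s ∈ Finset.range (m + 1), a s) * a m) ^ 2
      = (∑ s ∈ Finset.range (m + 1), a s) ^ 2 * a m ^ 2 := mul_pow _ _ _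
    _ ≤ ((m + 1 : ℕ) * ∑' s, a s ^ 2) * a m ^ 2 := by
      gcongr
      exact sq_sum_range_le_mul_tsum hsum (m + 1)
    _ = (∑' s, a s ^ 2) * (((m : ℝ) + 1) * a m ^ 2) := by push_cast; ring

/-- Sum of squares lemma, Boyle–Dykstra: if `{a_j}` is a
sequence of nonnegative reals with `∑ a_j²` convergent, then there is a
strictly increasing sequence of indices `{j_t}` such that
`(∑_{s ≤ j_t} a_s) · a_{j_t} → 0`. -/
theorem sum_of_squares_subsequence
    (a : ℕ → ℝ) (ha : ∀ j, 0 ≤ a j) (hsum : Summable (fun j => (a j) ^ 2)) :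
    ∃ j : ℕ → ℕ, StrictMono j ∧
      Tendsto (fun t => (∑ s ∈ Finset.range (j t + 1), a s) * a (j t))
        atTop (nhds 0) :=
  sum_of_squares_subsequence_general a hsum
end

section
/- Let M_1, ..., M_k be closed linear subspaces of a real Hilbert space X and M := ⋂_{l=1}^k M_l. Let x_0 ∈ X and let {x_i}_{i≥0} be a sequence in X satisfying: (1) {x_i} is Fejér monotone with respect to M, i.e. ‖x_{i+1} − c‖ ≤ ‖x_i − c‖ for all c ∈ M and all i; (2) there exists a strictly increasing sequence of indices {i_t}_t with limsup_{t→∞} ⟨x_{i_t} − x_0, x_{i_t}⟩ ≤ 0; (3) for every l ∈ {1,...,k} and every i > 0 there is an integer p_i^l > 0 such that x_{i+p_i^l} ∈ M_l and lim_{i→∞} ‖x_i − x_{i+p_i^l}‖ = 0; (4) x_i − x_0 ∈ M^⊥ for all i. Then {x_i} converges strongly to P_M(x_0). -/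
/-!
Let `m = P_M x₀`. Fejér monotonicity makes `‖xᵢ - m‖` nonincreasing, hence convergent to some
`d ≥ 0`, and the sequence is bounded. Since `xᵢ - x₀ ⊥ M` and `m ∈ M`,
`‖xᵢ - m‖² = ⟪xᵢ - x₀, xᵢ⟫ + ⟪x₀ - m, xᵢ - m⟫`. The last term tends to `0`: against
`v ∈ M_lᗮ` we have `⟪v, xᵢ - m⟫ = ⟪v, xᵢ - x_{i+p}⟫ → 0`, and `x₀ - m` lies in
`Mᗮ = closure (∑ₗ M_lᗮ)`, where convergence extends by boundedness. Along the subsequence of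
condition (2) this gives `d² ≤ 0`.
-/

open Filter Topology
open scoped RealInnerProductSpace NNReal

section

variable {X : Type*} [NormedAddCommGroup X] [InnerProductSpace ℝ X]

theorem isClosed_setOf_tendsto_inner_zero {ι : Type*} {l : Filter ι} {u : ι → X} {C : ℝ≥0}
    (hu : ∀ i, ‖u i‖ ≤ C) : IsClosed {w : X | Tendsto (fun i => ⟪w, u i⟫) l (𝓝 0)} := by
  refine Equicontinuous.isClosed_setOfPred_tendsto (f := fun _ => (0 : ℝ)) ?_ continuous_const
  refine (LipschitzWith.uniformEquicontinuous _ C fun i => ?_).equicontinuous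
  refine LipschitzWith.of_dist_le_mul fun v w => ?_
  calc dist ⟪v, u i⟫ ⟪w, u i⟫ = |⟪v - w, u i⟫| := by rw [Real.dist_eq, inner_sub_left]
    _ ≤ ‖v - w‖ * ‖u i‖ := abs_real_inner_le_norm _ _
    _ ≤ C * dist v w := by rw [dist_eq_norm, mul_comm]; gcongr; exact hu i

theorem Submodule.orthogonal_iInf_eq_topologicalClosure_iSup [CompleteSpace X] {ι : Type*}
    (M : ι → Submodule ℝ X) [∀ l, CompleteSpace (M l)] :
    (⨅ l, M l)ᗮ = (⨆ l, (M l)ᗮ).topologicalClosure := by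
  rw [← Submodule.orthogonal_orthogonal_eq_closure, ← Submodule.iInf_orthogonal]
  simp only [Submodule.orthogonal_orthogonal]

theorem tendsto_inner_of_mem_orthogonal_iInf [CompleteSpace X] {ι : Type*}
    (M : ι → Submodule ℝ X) [∀ l, CompleteSpace (M l)] {u : ℕ → X} {C : ℝ≥0}
    (hu : ∀ i, ‖u i‖ ≤ C) (h : ∀ l, ∀ v ∈ (M l)ᗮ, Tendsto (fun i => ⟪v, u i⟫) atTop (𝓝 0))
    {w : X} (hw : w ∈ (⨅ l, M l)ᗮ) : Tendsto (fun i => ⟪w, u i⟫) atTop (𝓝 0) := by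
  rw [Submodule.orthogonal_iInf_eq_topologicalClosure_iSup] at hw
  refine closure_minimal (fun v hv => ?_) (isClosed_setOf_tendsto_inner_zero hu) hw
  induction hv using Submodule.iSup_induction' with
  | mem l v hv => exact h l v hv
  | zero => simp
  | add v w _ _ hv hw => simpa only [Set.mem_ofPred_eq, inner_add_left, add_zero] using hv.add hw

theorem tendsto_inner_sub_of_tendsto_norm_sub {N : Submodule ℝ X} {v m : X} (hv : v ∈ Nᗮ)
    (hm : m ∈ N) {x y : ℕ → X} (hy : ∀ᶠ i in atTop, y i ∈ N)
    (hxy : Tendsto (fun i => ‖x i - y i‖) atTop (𝓝 0)) :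
    Tendsto (fun i => ⟪v, x i - m⟫) atTop (𝓝 0) := by
  have heq : ∀ᶠ i in atTop, ⟪v, x i - y i⟫ = ⟪v, x i - m⟫ := by
    filter_upwards [hy] with i hyi
    have hvy : ⟪v, y i - m⟫ = 0 := Submodule.inner_left_of_mem_orthogonal (N.sub_mem hyi hm) hv
    rw [← sub_add_sub_cancel (x i) (y i) m, inner_add_right, hvy, add_zero]
  refine (squeeze_zero_norm (fun i => norm_inner_le_norm v _) ?_).congr' heq
  simpa using hxy.const_mul ‖v‖

theorem tendsto_zero_of_antitone_of_limsup_sq_sub_nonpos {a c : ℕ → ℝ} (ha : Antitone a)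
    (ha₀ : ∀ i, 0 ≤ a i) (hc : Tendsto c atTop (𝓝 0)) {φ : ℕ → ℕ}
    (hφ : Tendsto φ atTop atTop)
    (h : limsup (fun t => a (φ t) ^ 2 - c (φ t)) atTop ≤ 0) :
    Tendsto a atTop (𝓝 0) := by
  obtain ⟨d, hd⟩ : ∃ d, Tendsto a atTop (𝓝 d) :=
    ⟨_, tendsto_atTop_ciInf ha ⟨0, by rintro _ ⟨i, rfl⟩; exact ha₀ i⟩⟩
  have hsq : Tendsto (fun t => a (φ t) ^ 2 - c (φ t)) atTop (𝓝 (d ^ 2)) := by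
    simpa using ((hd.comp hφ).pow 2).sub (hc.comp hφ)
  have hd₀ : 0 ≤ d := ge_of_tendsto' hd ha₀
  have : d = 0 := by nlinarith [hsq.limsup_eq ▸ h]
  exact this ▸ hd

end

/-- Conditions for strong convergence: let `M l` be closed
linear subspaces of a real Hilbert space with intersection `M = ⨅ l, M l`,
and let `{x_i}` be a sequence such that
(1) `{x_i}` is Fejér monotone with respect to `M`;
(2) there is a strictly increasing sequence of indices `{i_t}` with
    `limsup_t ⟪x_{i_t} - x_0, x_{i_t}⟫ ≤ 0`;
(3) for every `l` and every `i > 0` there is `p_i^l > 0` with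
    `x_{i + p_i^l} ∈ M l` and `‖x_i - x_{i + p_i^l}‖ → 0`;
(4) `x_i - x_0 ∈ Mᗮ` for all `i`.
Then `{x_i}` converges strongly to `P_M(x_0)`. -/
theorem conditions_for_strong_convergence
    {X : Type*} [NormedAddCommGroup X] [InnerProductSpace ℝ X] [CompleteSpace X]
    {k : ℕ} (M : Fin k → Submodule ℝ X) [∀ l, CompleteSpace (M l)]
    [CompleteSpace (⨅ l, M l : Submodule ℝ X)]
    (x : ℕ → X)
    (h1 : ∀ c ∈ (⨅ l, M l : Submodule ℝ X), ∀ i, ‖x (i + 1) - c‖ ≤ ‖x i - c‖)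
    (h2 : ∃ idx : ℕ → ℕ, StrictMono idx ∧
      limsup (fun t => ⟪x (idx t) - x 0, x (idx t)⟫) atTop ≤ 0)
    (h3 : ∀ l : Fin k, ∃ p : ℕ → ℕ,
      (∀ i, 0 < i → 0 < p i ∧ x (i + p i) ∈ M l) ∧
      Tendsto (fun i => ‖x i - x (i + p i)‖) atTop (nhds 0))
    (h4 : ∀ i, x i - x 0 ∈ (⨅ l, M l : Submodule ℝ X)ᗮ) :
    Tendsto x atTop
      (nhds (Submodule.orthogonalProjectionOnto (⨅ l, M l : Submodule ℝ X) (x 0) : X)) := by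
  set K : Submodule ℝ X := ⨅ l, M l
  set m : X := (Submodule.orthogonalProjectionOnto K (x 0) : X)
  have hmK : m ∈ K := (Submodule.orthogonalProjectionOnto K (x 0)).2
  have hanti : Antitone fun i => ‖x i - m‖ := antitone_nat_of_succ_le fun i => h1 m hmK i
  have hweak : Tendsto (fun i => ⟪x 0 - m, x i - m⟫) atTop (𝓝 0) := by
    refine tendsto_inner_of_mem_orthogonal_iInf M (C := ‖x 0 - m‖₊)
      (fun i => hanti (Nat.zero_le i)) (fun l v hv => ?_) (K.sub_starProjection_mem_orthogonal _)
    obtain ⟨p, hp, hpt⟩ := h3 l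
    exact tendsto_inner_sub_of_tendsto_norm_sub hv (iInf_le M l hmK)
      ((eventually_gt_atTop 0).mono fun i hi => (hp i hi).2) hpt
  have hid : ∀ i, ⟪x i - x 0, x i⟫ = ‖x i - m‖ ^ 2 - ⟪x 0 - m, x i - m⟫ := fun i => by
    have hm : ⟪x i - x 0, m⟫ = 0 := Submodule.inner_left_of_mem_orthogonal hmK (h4 i)
    rw [← real_inner_self_eq_norm_sq, eq_sub_iff_add_eq, ← sub_zero ⟪x i - x 0, x i⟫, ← hm,
      ← inner_sub_right, ← inner_add_left, sub_add_sub_cancel]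
  obtain ⟨φ, hφ, hlimsup⟩ := h2
  simp only [hid] at hlimsup
  exact tendsto_iff_norm_sub_tendsto_zero.2 <| tendsto_zero_of_antitone_of_limsup_sq_sub_nonpos
    hanti (fun _ => norm_nonneg _) hweak hφ.tendsto_atTop hlimsup
end

section
/- Consider Algorithm 1 (Accelerated Projections): let M_1,...,M_k be closed linear subspaces of a real Hilbert space X, M := ⋂_{l=1}^k M_l, and x_0 ∈ X. For each i ≥ 0 choose l_i ∈ {1,...,k}, set x̃_i := P_{M_{l_i}}(x_i), a_i := x_i − x̃_i, and H_i := {x ∈ X : ⟨a_i, x⟩ = 0} (so H_i = X when a_i = 0, and M ⊆ M_{l_i} ⊆ H_i); choose J_i ⊆ {0,1,...,i} with i ∈ J_i, set H̃_i := ⋂_{j∈J_i} H_j, and x_{i+1} := P_{H̃_i}(x̃_i). Suppose additionally: (A) there is an integer p̄ ≥ 0 such that for every l ∈ {1,...,k} and every i > 0 there is an integer p_i^l ∈ [0, p̄] with l_{i+p_i^l} = l (so that x̃_{i+p_i^l} = P_{M_l}(x_{i+p_i^l})); and (B) for every i, x_0 − x_i lies in the linear span of {a_j : j ∈ J_i}.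 Then the sequence {x_i} converges strongly to P_M(x_0). -/
/-!
For `m ∈ M` the three pieces `a_i`, `x̃_i - x_{i+1}`, `x_{i+1} - m` of `x_i - m` are pairwise
orthogonal, so `‖x_i - m‖` decreases and both step lengths tend to `0`. By (A) every `M_l` is
visited at least once in each window of `p̄ + 1` steps, hence `dist(x_i, M_l) → 0` for every `l`,
and the bounded sequence `x_i - P_M x_0` is weakly null against `⨆ M_lᗮ` and therefore against
its closure `Mᗮ`. Finally (B) puts `x_0 - x_{i+1}` into `H̃_iᗮ`, which gives
`‖x_{i+1} - P_M x_0‖² = ⟪x_0 - P_M x_0, x_{i+1} - P_M x_0⟫ → 0` since `x_0 - P_M x_0 ∈ Mᗮ`.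
-/

open Filter Topology Finset
open scoped RealInnerProductSpace

namespace Submodule

variable {𝕜 E : Type*} [RCLike 𝕜] [NormedAddCommGroup E] [InnerProductSpace 𝕜 E]

theorem mem_orthogonal_span_image_iff {ι : Type*} {a : ι → E} {J : Set ι} {v : E} :
    v ∈ (span 𝕜 (a '' J))ᗮ ↔ ∀ j ∈ J, inner 𝕜 (a j) v = 0 := by
  refine ⟨fun h j hj => h _ (subset_span ⟨j, hj, rfl⟩), fun h u hu => ?_⟩
  induction hu using span_induction with
  | mem u hu => obtain ⟨j, hj, rfl⟩ := hu; exact h j hj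
  | zero => exact inner_zero_left v
  | add u w _ _ hu hw => rw [inner_add_left, hu, hw, add_zero]
  | smul c u _ hu => rw [inner_smul_left, hu, mul_zero]

theorem sub_mem_orthogonal_of_forall_norm_sub_le {K : Submodule 𝕜 E} {u v : E} (hv : v ∈ K)
    (hmin : ∀ w ∈ K, ‖u - v‖ ≤ ‖u - w‖) : u - v ∈ Kᗮ := by
  have hinf : ‖u - v‖ = ⨅ w : K, ‖u - w‖ :=
    le_antisymm (le_ciInf fun w => hmin w w.2)
      (ciInf_le ⟨0, by rintro _ ⟨w, rfl⟩; positivity⟩ (⟨v, hv⟩ : K))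
  exact (mem_orthogonal' _ _).2 ((K.norm_eq_iInf_iff_inner_eq_zero hv).1 hinf)

theorem norm_sub_starProjection_le (K : Submodule 𝕜 E) [K.HasOrthogonalProjection] (u : E)
    {w : E} (hw : w ∈ K) : ‖u - K.starProjection u‖ ≤ ‖u - w‖ := by
  rw [starProjection_minimal]
  exact ciInf_le ⟨0, by rintro _ ⟨w, rfl⟩; positivity⟩ (⟨w, hw⟩ : K)

theorem orthogonal_iInf_eq_topologicalClosure_iSup_orthogonal [CompleteSpace E] {ι : Type*}
    (K : ι → Submodule 𝕜 E) [∀ i, (K i).HasOrthogonalProjection] :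
    (⨅ i, K i)ᗮ = (⨆ i, (K i)ᗮ).topologicalClosure := by
  rw [← orthogonal_orthogonal_eq_closure, ← iInf_orthogonal]
  simp only [orthogonal_orthogonal]

end Submodule

theorem tendsto_sub_succ_of_antitone {D : ℕ → ℝ} (hD : Antitone D) (hbdd : BddBelow (Set.range D)) :
    Tendsto (fun n => D n - D (n + 1)) atTop (𝓝 0) := by
  have h := tendsto_atTop_ciInf hD hbdd
  simpa using h.sub (h.comp (tendsto_add_atTop_nat 1))

section

variable {X : Type*} [NormedAddCommGroup X]

theorem tendsto_zero_of_norm_sq_le {a : ℕ → X} {e : ℕ → ℝ} (he : Tendsto e atTop (𝓝 0))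
    (h : ∀ n, ‖a n‖ ^ 2 ≤ e n) : Tendsto a atTop (𝓝 0) := by
  have he' := he.sqrt
  rw [Real.sqrt_zero] at he'
  exact tendsto_zero_iff_norm_tendsto_zero.2 <|
    squeeze_zero (fun n => norm_nonneg _) (fun n => Real.le_sqrt_of_sq_le (h n)) he'

theorem tendsto_zero_of_norm_sub_sq_eq {x a b : ℕ → X} {m : X}
    (h : ∀ n, ‖x n - m‖ ^ 2 = ‖a n‖ ^ 2 + ‖b n‖ ^ 2 + ‖x (n + 1) - m‖ ^ 2) :
    Tendsto a atTop (𝓝 0) ∧ Tendsto b atTop (𝓝 0) ∧ ∀ n, ‖x n - m‖ ≤ ‖x 0 - m‖ := by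
  have hD : Antitone fun n => ‖x n - m‖ ^ 2 :=
    antitone_nat_of_succ_le fun n => by linarith [h n, sq_nonneg ‖a n‖, sq_nonneg ‖b n‖]
  have hdiff := tendsto_sub_succ_of_antitone hD ⟨0, by rintro _ ⟨n, rfl⟩; positivity⟩
  refine ⟨tendsto_zero_of_norm_sq_le hdiff fun n => ?_,
    tendsto_zero_of_norm_sq_le hdiff fun n => ?_, fun n => ?_⟩
  · linarith [h n, sq_nonneg ‖b n‖]
  · linarith [h n, sq_nonneg ‖a n‖]
  · exact (pow_le_pow_iff_left₀ (norm_nonneg _) (norm_nonneg _) two_ne_zero).1 (hD (Nat.zero_le n))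

theorem norm_sub_le_sum_range_of_le (x y : ℕ → X) {n p N : ℕ} (hp : p ≤ N) :
    ‖x n - y (n + p)‖ ≤
      ∑ q ∈ range (N + 1), (‖x (n + q) - x (n + q + 1)‖ + ‖x (n + q) - y (n + q)‖) := by
  have hx : ‖x n - x (n + p)‖ ≤ ∑ q ∈ range (N + 1), ‖x (n + q) - x (n + q + 1)‖ :=
    calc ‖x n - x (n + p)‖ ≤ ∑ q ∈ range p, ‖x (n + q) - x (n + q + 1)‖ := by
          simpa [dist_eq_norm, add_assoc] using dist_le_range_sum_dist (fun q => x (n + q)) p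
      _ ≤ _ := sum_le_sum_of_subset_of_nonneg (range_subset_range.2 (by omega))
          fun _ _ _ => norm_nonneg _
  have hy : ‖x (n + p) - y (n + p)‖ ≤ ∑ q ∈ range (N + 1), ‖x (n + q) - y (n + q)‖ :=
    single_le_sum (f := fun q => ‖x (n + q) - y (n + q)‖) (fun _ _ => norm_nonneg _)
      (mem_range.2 (by omega))
  rw [sum_add_distrib]
  exact (norm_sub_le_norm_sub_add_norm_sub _ _ _).trans (add_le_add hx hy)

variable [InnerProductSpace ℝ X]

theorem norm_sub_sq_eq_of_starProjection {L H : Submodule ℝ X} [L.HasOrthogonalProjection]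
    {x x' m : X} (hx' : x' ∈ H) (hperp : L.starProjection x - x' ∈ Hᗮ) (hmL : m ∈ L)
    (hmH : m ∈ H) :
    ‖x - m‖ ^ 2 = ‖x - L.starProjection x‖ ^ 2 + ‖L.starProjection x - x'‖ ^ 2 + ‖x' - m‖ ^ 2 := by
  have h₁ : ⟪x - L.starProjection x, L.starProjection x - m⟫ = 0 :=
    (Submodule.mem_orthogonal' _ _).1 (L.sub_starProjection_mem_orthogonal x) _
      (sub_mem (L.starProjection_apply_mem x) hmL)
  have h₂ : ⟪L.starProjection x - x', x' - m⟫ = 0 :=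
    (Submodule.mem_orthogonal' _ _).1 hperp _ (sub_mem hx' hmH)
  rw [← sub_add_sub_cancel x (L.starProjection x) m, norm_add_sq_real, h₁,
    ← sub_add_sub_cancel (L.starProjection x) x' m, norm_add_sq_real, h₂]
  ring

theorem tendsto_norm_sub_starProjection_of_exists_mem {K : Submodule ℝ X}
    [K.HasOrthogonalProjection] {x y : ℕ → X} {N : ℕ}
    (hx : Tendsto (fun n => x n - x (n + 1)) atTop (𝓝 0))
    (hxy : Tendsto (fun n => x n - y n) atTop (𝓝 0))
    (hy : ∀ n, 0 < n → ∃ p ≤ N, y (n + p) ∈ K) :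
    Tendsto (fun n => ‖x n - K.starProjection (x n)‖) atTop (𝓝 0) := by
  have hsum : Tendsto (fun n => ∑ q ∈ range (N + 1),
      (‖x (n + q) - x (n + q + 1)‖ + ‖x (n + q) - y (n + q)‖)) atTop (𝓝 0) := by
    simpa using tendsto_finsetSum (range (N + 1)) fun q _ =>
      (hx.norm.add hxy.norm).comp (tendsto_add_atTop_nat q)
  refine squeeze_zero' (Eventually.of_forall fun n => norm_nonneg _) ?_ hsum
  filter_upwards [eventually_gt_atTop 0] with n hn
  obtain ⟨p, hp, hpK⟩ := hy n hn
  exact (K.norm_sub_starProjection_le _ hpK).trans (norm_sub_le_sum_range_of_le x y hp)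

theorem tendsto_inner_sub_of_mem_orthogonal {K : Submodule ℝ X} [K.HasOrthogonalProjection]
    {x : ℕ → X} {m v : X} (hm : m ∈ K) (hv : v ∈ Kᗮ)
    (hK : Tendsto (fun n => ‖x n - K.starProjection (x n)‖) atTop (𝓝 0)) :
    Tendsto (fun n => ⟪v, x n - m⟫) atTop (𝓝 0) := by
  have hbound : ∀ n, |⟪v, x n - m⟫| ≤ ‖v‖ * ‖x n - K.starProjection (x n)‖ := fun n => by
    have h0 : ⟪v, K.starProjection (x n) - m⟫ = 0 :=
      (Submodule.mem_orthogonal' _ _).1 hv _ (sub_mem (K.starProjection_apply_mem _) hm)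
    rw [← sub_add_sub_cancel (x n) (K.starProjection (x n)) m, inner_add_right, h0, add_zero]
    exact abs_real_inner_le_norm _ _
  rw [tendsto_zero_iff_abs_tendsto_zero]
  exact squeeze_zero (fun n => abs_nonneg _) hbound (by simpa using hK.const_mul ‖v‖)

theorem isClosed_setOf_tendsto_inner_zero_s8 {y : ℕ → X} {C : ℝ} (hC : ∀ n, ‖y n‖ ≤ C) :
    IsClosed {v : X | Tendsto (fun n => ⟪v, y n⟫) atTop (𝓝 0)} := by
  have hlip : ∀ n, LipschitzWith C.toNNReal fun v : X => ⟪v, y n⟫ := fun n =>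
    LipschitzWith.of_dist_le_mul fun v w => by
      rw [Real.dist_eq, ← inner_sub_left, dist_eq_norm, mul_comm]
      exact (abs_real_inner_le_norm _ _).trans
        (mul_le_mul_of_nonneg_left ((hC n).trans (Real.le_coe_toNNReal C)) (norm_nonneg _))
  exact (LipschitzWith.uniformEquicontinuous _ _ hlip).equicontinuous.isClosed_setOfPred_tendsto
    continuous_const

theorem tendsto_inner_sub_of_tendsto_norm_sub_starProjection [CompleteSpace X] {ι : Type*}
    {K : ι → Submodule ℝ X} [∀ i, (K i).HasOrthogonalProjection] {x : ℕ → X} {m : X}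
    (hm : m ∈ ⨅ i, K i) {C : ℝ} (hC : ∀ n, ‖x n - m‖ ≤ C)
    (hK : ∀ i, Tendsto (fun n => ‖x n - (K i).starProjection (x n)‖) atTop (𝓝 0))
    {v : X} (hv : v ∈ (⨅ i, K i)ᗮ) : Tendsto (fun n => ⟪v, x n - m⟫) atTop (𝓝 0) := by
  rw [Submodule.orthogonal_iInf_eq_topologicalClosure_iSup_orthogonal] at hv
  refine closure_minimal (fun w hw => ?_) (isClosed_setOf_tendsto_inner_zero_s8 hC) hv
  induction hw using Submodule.iSup_induction' with
  | mem i w hw => exact tendsto_inner_sub_of_mem_orthogonal (iInf_le K i hm) hw (hK i)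
  | zero => simp
  | add u w _ _ hu hw => simpa [inner_add_left] using hu.add hw

/-- `H̃ = ⋂_{j ∈ J} {y | ⟪a j, y⟫ = 0}` is handled as `(span ℝ (a '' J))ᗮ`. -/
theorem algorithm1_step_mem_orthogonal {a : ℕ → X} {J : Finset ℕ} {u x' : X}
    (h : (∀ j ∈ J, ⟪a j, x'⟫ = 0) ∧ ∀ y : X, (∀ j ∈ J, ⟪a j, y⟫ = 0) → ‖u - x'‖ ≤ ‖u - y‖) :
    x' ∈ (Submodule.span ℝ (a '' J))ᗮ ∧ u - x' ∈ (Submodule.span ℝ (a '' J))ᗮᗮ := by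
  simp only [← Finset.mem_coe, ← Submodule.mem_orthogonal_span_image_iff] at h
  exact ⟨h.1, Submodule.sub_mem_orthogonal_of_forall_norm_sub_le h.1 h.2⟩

variable {ι : Type*} {M : ι → Submodule ℝ X} [∀ i, (M i).HasOrthogonalProjection] {l : ℕ → ι}
  {x xt a : ℕ → X} {J : ℕ → Finset ℕ}

theorem algorithm1_iInf_le_orthogonal (hxt : ∀ i, xt i = (M (l i)).starProjection (x i))
    (ha : ∀ i, a i = x i - xt i) (s : Set ℕ) : ⨅ i, M i ≤ (Submodule.span ℝ (a '' s))ᗮ := by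
  intro m hm
  rw [Submodule.mem_orthogonal_span_image_iff]
  intro j _
  rw [ha j, hxt j]
  exact (Submodule.mem_orthogonal' _ _).1 ((M (l j)).sub_starProjection_mem_orthogonal (x j)) m
    (iInf_le M (l j) hm)

theorem algorithm1_norm_sub_sq_eq (hxt : ∀ i, xt i = (M (l i)).starProjection (x i))
    (ha : ∀ i, a i = x i - xt i) {i : ℕ}
    (hstep : (∀ j ∈ J i, ⟪a j, x (i + 1)⟫ = 0) ∧
      ∀ y : X, (∀ j ∈ J i, ⟪a j, y⟫ = 0) → ‖xt i - x (i + 1)‖ ≤ ‖xt i - y‖)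
    {m : X} (hm : m ∈ ⨅ i, M i) :
    ‖x i - m‖ ^ 2 = ‖a i‖ ^ 2 + ‖xt i - x (i + 1)‖ ^ 2 + ‖x (i + 1) - m‖ ^ 2 := by
  obtain ⟨hx', hperp⟩ := algorithm1_step_mem_orthogonal hstep
  rw [hxt i] at hperp
  rw [ha i, hxt i]
  exact norm_sub_sq_eq_of_starProjection hx' hperp (iInf_le M (l i) hm)
    (algorithm1_iInf_le_orthogonal hxt ha _ hm)

theorem algorithm1_norm_sub_sq_eq_inner (hxt : ∀ i, xt i = (M (l i)).starProjection (x i))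
    (ha : ∀ i, a i = x i - xt i) {i : ℕ} (hiJ : i ∈ J i)
    (hstep : (∀ j ∈ J i, ⟪a j, x (i + 1)⟫ = 0) ∧
      ∀ y : X, (∀ j ∈ J i, ⟪a j, y⟫ = 0) → ‖xt i - x (i + 1)‖ ≤ ‖xt i - y‖)
    (hB : x 0 - x i ∈ Submodule.span ℝ (a '' (J i : Set ℕ))) {m : X} (hm : m ∈ ⨅ i, M i) :
    ‖x (i + 1) - m‖ ^ 2 = ⟪x 0 - m, x (i + 1) - m⟫ := by
  set S := Submodule.span ℝ (a '' (J i : Set ℕ))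
  obtain ⟨hx', hperp⟩ := algorithm1_step_mem_orthogonal hstep
  have h0 : x 0 - x (i + 1) ∈ Sᗮᗮ := by
    rw [show x 0 - x (i + 1) = (x 0 - x i + a i) + (xt i - x (i + 1)) by rw [ha i]; abel]
    exact add_mem (S.le_orthogonal_orthogonal (add_mem hB (Submodule.subset_span ⟨i, hiJ, rfl⟩)))
      hperp
  have hmS : m ∈ Sᗮ := algorithm1_iInf_le_orthogonal hxt ha _ hm
  rw [← sub_add_sub_cancel (x 0) (x (i + 1)) m, inner_add_left,
    (Submodule.mem_orthogonal' _ _).1 h0 _ (sub_mem hx' hmS), zero_add,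
    real_inner_self_eq_norm_sq]

end

/-- Strong convergence of Algorithm 1, Version 1: in Algorithm 1
(`x̃_i = P_{M_{l_i}} x_i`, `a_i = x_i - x̃_i`, `H_i = {x : ⟪a_i, x⟫ = 0}`,
`i ∈ J_i ⊆ {0,…,i}`, `H̃_i = ⋂_{j ∈ J_i} H_j`, `x_{i+1} = P_{H̃_i}(x̃_i)`),
assume (A) there is `p̄` such that for every `l` and every `i > 0` there is
`p_i^l ∈ [0, p̄]` with `l_{i+p_i^l} = l`, and (B) `x_0 - x_i` lies in the span
of `{a_j : j ∈ J_i}` for every `i`.  Then `x_i → P_M(x_0)` strongly, where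
`M = ⨅ l, M l`. -/
theorem algorithm1_strong_convergence_version1
    {X : Type*} [NormedAddCommGroup X] [InnerProductSpace ℝ X] [CompleteSpace X]
    {k : ℕ} (M : Fin k → Submodule ℝ X) [∀ l, CompleteSpace (M l)]
    [CompleteSpace (⨅ l, M l : Submodule ℝ X)]
    (l : ℕ → Fin k) (x xt a : ℕ → X) (J : ℕ → Finset ℕ)
    (hxt : ∀ i, xt i = ((M (l i)).orthogonalProjectionOnto (x i) : X))
    (ha : ∀ i, a i = x i - xt i)
    (hJ : ∀ i, i ∈ J i ∧ ∀ j ∈ J i, j ≤ i)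
    -- `x_{i+1}` is the orthogonal projection of `x̃_i` onto
    -- `H̃_i = ⋂_{j ∈ J_i} {y : ⟪a_j, y⟫ = 0}`:
    (hstep : ∀ i,
      (∀ j ∈ J i, ⟪a j, x (i + 1)⟫ = 0) ∧
      ∀ y : X, (∀ j ∈ J i, ⟪a j, y⟫ = 0) → ‖xt i - x (i + 1)‖ ≤ ‖xt i - y‖)
    -- condition (A):
    (hA : ∃ pbar : ℕ, ∀ lidx : Fin k, ∀ i, 0 < i →
      ∃ p ≤ pbar, l (i + p) = lidx)
    -- condition (B):
    (hB : ∀ i, x 0 - x i ∈ Submodule.span ℝ (a '' (J i : Set ℕ))) :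
    Tendsto x atTop
      (nhds ((⨅ l, M l : Submodule ℝ X).orthogonalProjectionOnto (x 0) : X)) := by
  simp only [Submodule.coe_orthogonalProjectionOnto_apply] at hxt ⊢
  set m := (⨅ l, M l).starProjection (x 0)
  have hm : m ∈ ⨅ l, M l := Submodule.starProjection_apply_mem _ _
  obtain ⟨ha0, hb0, hbdd⟩ := tendsto_zero_of_norm_sub_sq_eq fun i =>
    algorithm1_norm_sub_sq_eq hxt ha (hstep i) hm
  have hxxt : Tendsto (fun n => x n - xt n) atTop (𝓝 0) := by simpa only [← ha] using ha0
  have hdx : Tendsto (fun n => x n - x (n + 1)) atTop (𝓝 0) := by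
    simpa only [sub_add_sub_cancel, add_zero] using hxxt.add hb0
  obtain ⟨N, hN⟩ := hA
  have hdist (i : Fin k) : Tendsto (fun n => ‖x n - (M i).starProjection (x n)‖) atTop (𝓝 0) :=
    tendsto_norm_sub_starProjection_of_exists_mem hdx hxxt fun n hn => by
      obtain ⟨p, hp, hlp⟩ := hN i n hn
      exact ⟨p, hp, hlp ▸ hxt (n + p) ▸ Submodule.starProjection_apply_mem _ _⟩
  have hweak : Tendsto (fun n => ⟪x 0 - m, x n - m⟫) atTop (𝓝 0) :=
    tendsto_inner_sub_of_tendsto_norm_sub_starProjection hm hbdd hdist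
      ((⨅ l, M l).sub_starProjection_mem_orthogonal (x 0))
  have hsq : Tendsto (fun n => ‖x (n + 1) - m‖ ^ 2) atTop (𝓝 0) := by
    simpa only [algorithm1_norm_sub_sq_eq_inner hxt ha (hJ _).1 (hstep _) (hB _) hm,
      Function.comp_def] using
      hweak.comp (tendsto_add_atTop_nat 1)
  rw [← tendsto_add_atTop_iff_nat 1, ← tendsto_sub_nhds_zero_iff]
  exact tendsto_zero_of_norm_sq_le hsq fun n => le_rfl
end

section
/- Consider Algorithm 1 (Accelerated Projections): let M_1,...,M_k be closed linear subspaces of a real Hilbert space X, M := ⋂_{l=1}^k M_l, and x_0 ∈ X. For each i ≥ 0 choose l_i ∈ {1,...,k}, set x̃_i := P_{M_{l_i}}(x_i), a_i := x_i − x̃_i, and H_i := {x ∈ X : ⟨a_i, x⟩ = 0}; choose J_i ⊆ {0,1,...,i} with i ∈ J_i, set H̃_i := ⋂_{j∈J_i} H_j, and x_{i+1} := P_{H̃_i}(x̃_i). Suppose additionally: (A) there is an integer p̄ ≥ 0 such that for every l ∈ {1,...,k} and every i > 0 there is an integer p_i^l ∈ [0, p̄] with l_{i+p_i^l} = l; and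 (B′) there exist vectors ṽ_{i,l} ∈ M_l^⊥ and v_{i,l} ∈ M_l^⊥ (for all i ≥ 0 and l ∈ {1,...,k}) with x_i − x̃_i = ∑_{l=1}^k ṽ_{i,l} and x̃_i − x_{i+1} = ∑_{l=1}^k v_{i,l}, and a constant K such that ∑_{l=1}^k (‖ṽ_{i,l}‖² + ‖v_{i,l}‖²) ≤ K (‖x_i − x̃_i‖² + ‖x̃_i − x_{i+1}‖²) for all i ≥ 0. Then the sequence {x_i} converges strongly to P_M(x_0). -/
/-!
Each step of the algorithm consists of two orthogonal projections, neither of which moves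
`m = P_M x₀`, so by Pythagoras `‖x_i - m‖²` drops by exactly
`b_i = ‖x_i - x̃_i‖² + ‖x̃_i - x_{i+1}‖²`; hence `∑ b_i < ∞`.
By (A) every `x_j` lies within `O(√e_j)` of each `M_l`, where `e_j = ∑_{q ≤ p̄+1} b_{j+q}`, and
by (B′) each increment `x_n - x_{n+1}` splits into pieces from the `M_lᗮ` of total length
`O(√b_n)`. Hence `|⟪x_j - m, x_n - x_{n+1}⟫| = O(√e_j √b_n)`, which gives, for `i ≤ j`,
`‖x_i - x_j‖² ≤ ‖x_i - m‖² - ‖x_j - m‖² + O(√e_j ∑_{n<j} √b_n)`.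
As `e` is summable and the harmonic series diverges, `j e_j → 0` along a subsequence, while
`(∑_{n<j} √b_n)² ≤ j ∑ b_n`; along it the error term vanishes and `x_j` is Cauchy. The limit lies
in every `M_l` and differs from `m` by a vector of `Mᗮ` (all increments lie there), so it is `m`;
since `‖x_j - m‖` decreases, the whole sequence converges to `m`.
-/

open Filter Finset
open scoped RealInnerProductSpace Topology

theorem Summable.mapClusterPt_zero_natCast_mul {e : ℕ → ℝ} (he : Summable e)
    (he0 : ∀ n, 0 ≤ e n) : MapClusterPt 0 atTop fun n : ℕ => (n : ℝ) * e n := by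
  rw [Metric.nhds_basis_ball.mapClusterPt_iff_frequently]
  intro ε hε
  by_contra h
  have hlow : ∀ᶠ n : ℕ in atTop, ‖ε * (n : ℝ)⁻¹‖ ≤ e n := by
    filter_upwards [not_frequently.1 h, eventually_gt_atTop 0] with n hn hn0
    have hn0' : (0 : ℝ) < n := Nat.cast_pos.2 hn0
    rw [Metric.mem_ball, Real.dist_eq, sub_zero, not_lt,
      abs_of_nonneg (mul_nonneg hn0'.le (he0 n))] at hn
    rw [norm_mul, Real.norm_of_nonneg hε.le, norm_inv, Real.norm_natCast, ← div_eq_mul_inv,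
      div_le_iff₀ hn0', mul_comm]
    exact hn
  exact Real.not_summable_natCast_inv
    ((summable_mul_left_iff hε.ne').1 (he.of_norm_bounded_eventually_nat hlow))

theorem Real.sum_sqrt_le_sqrt_card_mul_sqrt_sum {ι : Type*} (s : Finset ι) {f : ι → ℝ}
    (hf : ∀ i, 0 ≤ f i) : ∑ i ∈ s, √(f i) ≤ √(#s) * √(∑ i ∈ s, f i) := by
  simpa using Real.sum_sqrt_mul_sqrt_le s (fun _ => zero_le_one) hf

theorem exists_strictMono_tendsto_sqrt_mul_sum_sqrt {b e : ℕ → ℝ} (hb : Summable b)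
    (hb0 : ∀ n, 0 ≤ b n) (he : Summable e) (he0 : ∀ n, 0 ≤ e n) :
    ∃ φ : ℕ → ℕ, StrictMono φ ∧
      Tendsto (fun r => √(e (φ r)) * ∑ n ∈ range (φ r), √(b n)) atTop (𝓝 0) := by
  obtain ⟨φ, hφ, hlim⟩ := (he.mapClusterPt_zero_natCast_mul he0).tendsto_subseq
  refine ⟨φ, hφ, squeeze_zero (g := fun r => √(∑' n, b n) * √(φ r * e (φ r)))
    (fun r => by positivity) (fun r => ?_) ?_⟩
  · calc √(e (φ r)) * ∑ n ∈ range (φ r), √(b n)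
        ≤ √(e (φ r)) * (√(φ r) * √(∑' n, b n)) := by
          gcongr
          refine (Real.sum_sqrt_le_sqrt_card_mul_sqrt_sum _ hb0).trans ?_
          rw [card_range]
          gcongr
          exact hb.sum_le_tsum _ fun n _ => hb0 n
      _ = √(∑' n, b n) * √(φ r * e (φ r)) := by
          rw [Real.sqrt_mul (Nat.cast_nonneg _)]; ring
  · simpa using ((Real.continuous_sqrt.tendsto 0).comp hlim).const_mul √(∑' n, b n)

theorem sum_range_le_sub_of_add_le {a b : ℕ → ℝ} (h : ∀ n, a (n + 1) + b n ≤ a n) (N : ℕ) :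
    ∑ n ∈ range N, b n ≤ a 0 - a N := by
  induction N with
  | zero => simp
  | succ N ih => rw [sum_range_succ]; linarith [h N]

theorem cauchySeq_of_dist_sq_le {α : Type*} [PseudoMetricSpace α] {y : ℕ → α} {a η : ℕ → ℝ}
    (ha : CauchySeq a) (hη : Tendsto η atTop (𝓝 0))
    (h : ∀ r r', r ≤ r' → dist (y r) (y r') ^ 2 ≤ a r - a r' + η r') : CauchySeq y := by
  rw [Metric.cauchySeq_iff']
  intro ε hε
  obtain ⟨N₁, hN₁⟩ := Metric.cauchySeq_iff.1 ha (ε ^ 2 / 2) (by positivity)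
  obtain ⟨N₂, hN₂⟩ := Metric.tendsto_atTop.1 hη (ε ^ 2 / 2) (by positivity)
  refine ⟨max N₁ N₂, fun n hn => ?_⟩
  have ha' := hN₁ (max N₁ N₂) (le_max_left _ _) n ((le_max_left _ _).trans hn)
  have hη' := hN₂ n ((le_max_right _ _).trans hn)
  rw [Real.dist_eq] at ha' hη'
  have hsq : dist (y (max N₁ N₂)) (y n) ^ 2 < ε ^ 2 := by
    linarith [h _ _ hn, (abs_lt.1 ha').2, (abs_lt.1 hη').2]
  rw [dist_comm]
  exact (pow_lt_pow_iff_left₀ dist_nonneg hε.le two_ne_zero).1 hsq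

theorem tendsto_of_antitone_dist_of_subseq {α : Type*} [PseudoMetricSpace α] {x : ℕ → α} {m : α}
    (hx : Antitone fun n => dist (x n) m) {φ : ℕ → ℕ} (hφ : Tendsto (x ∘ φ) atTop (𝓝 m)) :
    Tendsto x atTop (𝓝 m) := by
  rw [Metric.tendsto_atTop] at hφ ⊢
  intro ε hε
  obtain ⟨R, hR⟩ := hφ ε hε
  exact ⟨φ R, fun n hn => (hx hn).trans_lt (hR R le_rfl)⟩

theorem IsClosed.mem_of_tendsto_of_dist_le {α : Type*} [PseudoMetricSpace α] {s : Set α}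
    (hs : IsClosed s) {y : ℕ → α} {z : α} (hy : Tendsto y atTop (𝓝 z)) {δ : ℕ → ℝ}
    (hδ : Tendsto δ atTop (𝓝 0)) (hnear : ∀ r, ∃ u ∈ s, dist (y r) u ≤ δ r) : z ∈ s := by
  choose u hus hu using hnear
  exact hs.mem_of_tendsto
    (tendsto_of_tendsto_of_dist hy (squeeze_zero (fun _ => dist_nonneg) hu hδ))
    (Eventually.of_forall hus)

theorem exists_add_lt_add_two_eq {ι : Type*} {l : ℕ → ι} {pbar : ℕ}
    (h : ∀ lidx, ∀ i, 0 < i → ∃ p ≤ pbar, l (i + p) = lidx) (lidx : ι) (i : ℕ) :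
    ∃ p < pbar + 2, l (i + p) = lidx := by
  rcases Nat.eq_zero_or_pos i with rfl | hi
  · obtain ⟨p, hp, hlp⟩ := h lidx 1 one_pos
    exact ⟨1 + p, by omega, by rwa [zero_add]⟩
  · obtain ⟨p, hp, hlp⟩ := h lidx i hi
    exact ⟨p, by omega, hlp⟩

theorem sum_norm_add_le_sqrt_mul_sqrt {ι E : Type*} [Fintype ι] [SeminormedAddCommGroup E]
    (f g : ι → E) {K B : ℝ} (hB : 0 ≤ B) (h : ∑ l, (‖f l‖ ^ 2 + ‖g l‖ ^ 2) ≤ K * B) :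
    ∑ l, ‖f l + g l‖ ≤ √(2 * Fintype.card ι * K) * √B := by
  rw [← Real.sqrt_mul' _ hB]
  refine Real.le_sqrt_of_sq_le ?_
  calc (∑ l, ‖f l + g l‖) ^ 2 ≤ Fintype.card ι * ∑ l, ‖f l + g l‖ ^ 2 := by
        simpa using sq_sum_le_card_mul_sum_sq (s := univ) (f := fun l => ‖f l + g l‖)
    _ ≤ Fintype.card ι * ∑ l, 2 * (‖f l‖ ^ 2 + ‖g l‖ ^ 2) := by
        gcongr with l
        exact (pow_le_pow_left₀ (norm_nonneg _) (norm_add_le _ _) 2).trans add_sq_le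
    _ ≤ 2 * Fintype.card ι * K * B := by
        rw [← mul_sum]
        nlinarith [(Fintype.card ι).cast_nonneg (α := ℝ)]

theorem norm_sub_le_sqrt_mul_sqrt_sum {E : Type*} [SeminormedAddCommGroup E] (x y : ℕ → E)
    (j p : ℕ) : ‖x j - y (j + p)‖ ≤ √(2 * (p + 1)) *
      √(∑ q ∈ range (p + 1), (‖x (j + q) - y (j + q)‖ ^ 2 + ‖y (j + q) - x (j + q + 1)‖ ^ 2)) := by
  set α : ℕ → ℝ := fun q => ‖x (j + q) - y (j + q)‖
  set β : ℕ → ℝ := fun q => ‖y (j + q) - x (j + q + 1)‖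
  have htri : ‖x j - y (j + p)‖ ≤ ∑ q ∈ range (p + 1), (α q + β q) := by
    rw [sum_range_succ]
    calc ‖x j - y (j + p)‖ ≤ ‖x j - x (j + p)‖ + α p := norm_sub_le_norm_sub_add_norm_sub _ _ _
      _ ≤ ∑ q ∈ range p, (α q + β q) + (α p + β p) := by
        gcongr ?_ + ?_
        · simpa [dist_eq_norm] using (dist_le_range_sum_dist (fun q => x (j + q)) p).trans
            (sum_le_sum fun q _ => by
              rw [dist_eq_norm]; exact norm_sub_le_norm_sub_add_norm_sub _ (y (j + q)) _)
        · exact le_add_of_nonneg_right (norm_nonneg _)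
  have hpair : ∀ q, α q + β q ≤ √2 * √(α q ^ 2 + β q ^ 2) := fun q => by
    rw [← Real.sqrt_mul zero_le_two]
    exact Real.le_sqrt_of_sq_le add_sq_le
  calc ‖x j - y (j + p)‖ ≤ ∑ q ∈ range (p + 1), √2 * √(α q ^ 2 + β q ^ 2) :=
        htri.trans (sum_le_sum fun q _ => hpair q)
    _ ≤ √2 * (√(p + 1) * √(∑ q ∈ range (p + 1), (α q ^ 2 + β q ^ 2))) := by
        rw [← mul_sum]
        gcongr
        simpa using Real.sum_sqrt_le_sqrt_card_mul_sqrt_sum (range (p + 1))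
          (f := fun q => α q ^ 2 + β q ^ 2) fun q => by positivity
    _ = _ := by rw [Real.sqrt_mul zero_le_two]; ring

theorem exists_mem_norm_sub_le_of_visits {ι E : Type*} [SeminormedAddCommGroup E]
    (S : ι → Set E) {l : ℕ → ι} {x y : ℕ → E} (hy : ∀ i, y i ∈ S (l i)) {P : ℕ}
    (hl : ∀ lidx i, ∃ p < P, l (i + p) = lidx) (j : ℕ) (lidx : ι) :
    ∃ u ∈ S lidx, ‖x j - u‖ ≤ √(2 * P) *
      √(∑ q ∈ range P, (‖x (j + q) - y (j + q)‖ ^ 2 + ‖y (j + q) - x (j + q + 1)‖ ^ 2)) := by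
  obtain ⟨p, hp, rfl⟩ := hl lidx j
  refine ⟨y (j + p), hy _, (norm_sub_le_sqrt_mul_sqrt_sum x y j p).trans ?_⟩
  gcongr
  all_goals exact_mod_cast hp

section InnerProductSpace

variable {X : Type*} [NormedAddCommGroup X] [InnerProductSpace ℝ X]

theorem norm_sub_sq_eq_add_of_inner_eq_zero {x y z : X} (h : ⟪x - y, y - z⟫ = 0) :
    ‖x - z‖ ^ 2 = ‖x - y‖ ^ 2 + ‖y - z‖ ^ 2 := by
  rw [← sub_add_sub_cancel x y z, norm_add_sq_real, h]
  ring

theorem inner_eq_zero_of_forall_norm_sub_le {ι : Type*} (A : ι → X) (s : Set ι) {u v : X}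
    (hv : ∀ j ∈ s, ⟪A j, v⟫ = 0) (hmin : ∀ y, (∀ j ∈ s, ⟪A j, y⟫ = 0) → ‖u - v‖ ≤ ‖u - y‖)
    {y : X} (hy : ∀ j ∈ s, ⟪A j, y⟫ = 0) : ⟪u - v, y⟫ = 0 := by
  set K : Submodule ℝ X := ⨅ j ∈ s, (ℝ ∙ A j)ᗮ
  have hK : ∀ y, y ∈ K ↔ ∀ j ∈ s, ⟪A j, y⟫ = 0 := by
    simp [K, Submodule.mem_iInf, Submodule.mem_orthogonal_singleton_iff_inner_right]
  refine (K.norm_eq_iInf_iff_real_inner_eq_zero ((hK v).2 hv)).1 ?_ y ((hK y).2 hy)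
  exact le_antisymm (le_ciInf fun w => hmin w ((hK w).1 w.2))
    (ciInf_le ⟨0, Set.forall_mem_range.2 fun _ => norm_nonneg _⟩ (⟨v, (hK v).2 hv⟩ : K))

theorem norm_sub_sq_eq_of_projection_steps (K : Submodule ℝ X) {ι : Type*} (A : ι → X)
    (s : Set ι) {x xt x' m : X} (hxt : xt ∈ K) (hxxt : x - xt ∈ Kᗮ) (hm : m ∈ K)
    (hmA : ∀ j ∈ s, ⟪A j, m⟫ = 0) (hx'A : ∀ j ∈ s, ⟪A j, x'⟫ = 0)
    (hmin : ∀ y, (∀ j ∈ s, ⟪A j, y⟫ = 0) → ‖xt - x'‖ ≤ ‖xt - y‖) :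
    ‖x - m‖ ^ 2 = ‖x - xt‖ ^ 2 + ‖xt - x'‖ ^ 2 + ‖x' - m‖ ^ 2 := by
  rw [norm_sub_sq_eq_add_of_inner_eq_zero (Submodule.inner_left_of_mem_orthogonal
      (sub_mem hxt hm) hxxt),
    norm_sub_sq_eq_add_of_inner_eq_zero (inner_eq_zero_of_forall_norm_sub_le A s hx'A hmin
      fun j hj => by rw [inner_sub_right, hx'A j hj, hmA j hj, sub_zero]),
    add_assoc]

theorem abs_inner_sum_le_of_forall_exists_norm_sub_le {ι : Type*} [Fintype ι]
    (M : ι → Submodule ℝ X) {z : X} {δ : ℝ} (hz : ∀ l, ∃ u ∈ M l, ‖z - u‖ ≤ δ) {w : ι → X}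
    (hw : ∀ l, w l ∈ (M l)ᗮ) : |⟪z, ∑ l, w l⟫| ≤ δ * ∑ l, ‖w l‖ := by
  rw [inner_sum, mul_sum]
  refine (abs_sum_le_sum_abs _ _).trans (sum_le_sum fun l _ => ?_)
  obtain ⟨u, hu, hzu⟩ := hz l
  calc |⟪z, w l⟫| = |⟪z - u, w l⟫| := by
        rw [inner_sub_left, Submodule.inner_right_of_mem_orthogonal hu (hw l), sub_zero]
    _ ≤ ‖z - u‖ * ‖w l‖ := abs_real_inner_le_norm _ _
    _ ≤ δ * ‖w l‖ := by gcongr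

theorem norm_sub_sq_le_of_abs_inner_le (x : ℕ → X) (m : X) {i j : ℕ} (hij : i ≤ j) {s : ℕ → ℝ}
    (h : ∀ n, |⟪x n - x (n + 1), x j - m⟫| ≤ s n) :
    ‖x i - x j‖ ^ 2 ≤ ‖x i - m‖ ^ 2 - ‖x j - m‖ ^ 2 + 2 * ∑ n ∈ range j, s n := by
  have htel : x i - x j = ∑ n ∈ Ico i j, (x n - x (n + 1)) := by
    rw [sum_Ico_eq_sub _ hij, sum_range_sub', sum_range_sub']
    abel
  have habs : |⟪x i - x j, x j - m⟫| ≤ ∑ n ∈ range j, s n := by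
    rw [htel, sum_inner]
    calc _ ≤ ∑ n ∈ Ico i j, |⟪x n - x (n + 1), x j - m⟫| := abs_sum_le_sum_abs _ _
      _ ≤ ∑ n ∈ Ico i j, s n := sum_le_sum fun n _ => h n
      _ ≤ ∑ n ∈ range j, s n :=
        sum_le_sum_of_subset_of_nonneg (fun n hn => mem_range.2 (mem_Ico.1 hn).2)
          fun n _ _ => (abs_nonneg _).trans (h n)
  have hsplit : ‖x i - m‖ ^ 2 = ‖x i - x j‖ ^ 2 + 2 * ⟪x i - x j, x j - m⟫ + ‖x j - m‖ ^ 2 := by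
    rw [← norm_add_sq_real, sub_add_sub_cancel]
  linarith [neg_abs_le ⟪x i - x j, x j - m⟫]

theorem norm_sub_sq_le_of_orthogonal_increments {ι : Type*} [Fintype ι] (M : ι → Submodule ℝ X)
    {x : ℕ → X} {m : X} (hm : ∀ l, m ∈ M l) {w : ℕ → ι → X} (hw : ∀ n l, w n l ∈ (M l)ᗮ)
    (hxw : ∀ n, x n - x (n + 1) = ∑ l, w n l) {b : ℕ → ℝ} {c : ℝ}
    (hwb : ∀ n, ∑ l, ‖w n l‖ ≤ c * √(b n)) {i j : ℕ} (hij : i ≤ j) {δ : ℝ} (hδ : 0 ≤ δ)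
    (hnear : ∀ l, ∃ u ∈ M l, ‖x j - u‖ ≤ δ) :
    ‖x i - x j‖ ^ 2 ≤ ‖x i - m‖ ^ 2 - ‖x j - m‖ ^ 2 + 2 * δ * c * ∑ n ∈ range j, √(b n) := by
  have hnear' : ∀ l, ∃ u ∈ M l, ‖(x j - m) - u‖ ≤ δ := fun l =>
    let ⟨u, hu, hxu⟩ := hnear l
    ⟨u - m, sub_mem hu (hm l), by rwa [sub_sub_sub_cancel_right]⟩
  have := norm_sub_sq_le_of_abs_inner_le x m hij (s := fun n => δ * (c * √(b n))) fun n => by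
    rw [real_inner_comm, hxw]
    exact (abs_inner_sum_le_of_forall_exists_norm_sub_le M hnear' (hw n)).trans
      (mul_le_mul_of_nonneg_left (hwb n) hδ)
  simp only [← mul_sum] at this
  linarith

theorem eq_of_tendsto_of_orthogonal_increments {ι : Type*} [Fintype ι] (M : ι → Submodule ℝ X)
    (hM : ∀ l, IsClosed (M l : Set X)) {x : ℕ → X} {m : X} (hm : m ∈ ⨅ l, M l)
    (hx0 : x 0 - m ∈ (⨅ l, M l)ᗮ) {w : ℕ → ι → X} (hw : ∀ n l, w n l ∈ (M l)ᗮ)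
    (hxw : ∀ n, x n - x (n + 1) = ∑ l, w n l) {φ : ℕ → ℕ} {y : X}
    (hy : Tendsto (x ∘ φ) atTop (𝓝 y)) {δ : ℕ → ℝ} (hδ : Tendsto δ atTop (𝓝 0))
    (hnear : ∀ r l, ∃ u ∈ M l, ‖x (φ r) - u‖ ≤ δ r) : y = m := by
  set N := ⨅ l, M l
  have hyN : y ∈ N := Submodule.mem_iInf _ |>.2 fun l => (hM l).mem_of_tendsto_of_dist_le hy hδ
    fun r => by simpa only [Function.comp, dist_eq_norm, SetLike.mem_coe] using hnear r l
  have hperp : ∀ n, x n - m ∈ Nᗮ := by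
    intro n
    induction n with
    | zero => exact hx0
    | succ n ih =>
      rw [← sub_sub_sub_cancel_left m (x (n + 1)) (x n), hxw]
      exact sub_mem ih (sum_mem fun l _ => Submodule.orthogonal_le (iInf_le M l) (hw n l))
  have hyperp : y - m ∈ Nᗮ := N.isClosed_orthogonal.mem_of_tendsto (hy.sub_const m)
    (Eventually.of_forall fun r => hperp (φ r))
  have := N.inf_orthogonal_eq_bot ▸ Submodule.mem_inf.2 ⟨sub_mem hyN hm, hyperp⟩
  exact sub_eq_zero.1 ((Submodule.mem_bot ℝ).1 this)

theorem tendsto_of_fejer_of_orthogonal_increments [CompleteSpace X] {ι : Type*} [Fintype ι]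
    (M : ι → Submodule ℝ X) (hM : ∀ l, IsClosed (M l : Set X)) {x : ℕ → X} {m : X}
    (hm : m ∈ ⨅ l, M l) (hx0 : x 0 - m ∈ (⨅ l, M l)ᗮ) {b : ℕ → ℝ} (hb : ∀ n, 0 ≤ b n)
    (hdesc : ∀ n, ‖x (n + 1) - m‖ ^ 2 + b n ≤ ‖x n - m‖ ^ 2)
    {w : ℕ → ι → X} (hw : ∀ n l, w n l ∈ (M l)ᗮ) (hxw : ∀ n, x n - x (n + 1) = ∑ l, w n l)
    {c : ℝ} (hwb : ∀ n, ∑ l, ‖w n l‖ ≤ c * √(b n)) {C : ℝ} (hC : 0 ≤ C) (P : ℕ)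
    (hnear : ∀ j l, ∃ u ∈ M l, ‖x j - u‖ ≤ C * √(∑ q ∈ range P, b (j + q))) :
    Tendsto x atTop (𝓝 m) := by
  set e : ℕ → ℝ := fun j => ∑ q ∈ range P, b (j + q)
  have hanti : Antitone fun n => ‖x n - m‖ := antitone_nat_of_succ_le fun n =>
    (sq_le_sq₀ (norm_nonneg _) (norm_nonneg _)).1 (by linarith [hdesc n, hb n])
  have hbsum : Summable b := summable_of_sum_range_le (c := ‖x 0 - m‖ ^ 2) hb fun n =>
    (sum_range_le_sub_of_add_le (a := fun n => ‖x n - m‖ ^ 2) hdesc n).trans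
      (by linarith [sq_nonneg ‖x n - m‖])
  have hesum : Summable e := summable_sum fun q _ => (summable_nat_add_iff q).2 hbsum
  obtain ⟨φ, hφ, hη⟩ := exists_strictMono_tendsto_sqrt_mul_sum_sqrt hbsum hb hesum
    fun j => sum_nonneg fun q _ => hb _
  have hsq : Tendsto (fun r => ‖x (φ r) - m‖ ^ 2) atTop (𝓝 ((⨅ n, ‖x n - m‖) ^ 2)) :=
    ((tendsto_atTop_ciInf hanti ⟨0, Set.forall_mem_range.2 fun _ => norm_nonneg _⟩).comp
      hφ.tendsto_atTop).pow 2
  obtain ⟨y, hy⟩ := cauchySeq_tendsto_of_complete <| cauchySeq_of_dist_sq_le (y := x ∘ φ)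
    hsq.cauchySeq (by simpa using hη.const_mul (2 * C * c)) fun r r' hrr' => by
      rw [Function.comp_apply, Function.comp_apply, dist_eq_norm]
      exact (norm_sub_sq_le_of_orthogonal_increments M (Submodule.mem_iInf _ |>.1 hm) hw hxw hwb
        (hφ.monotone hrr') (by positivity) (hnear (φ r'))).trans_eq (by ring)
  have hym : y = m := eq_of_tendsto_of_orthogonal_increments M hM hm hx0 hw hxw hy
    (by simpa using (((Real.continuous_sqrt.tendsto 0).comp
      (hesum.tendsto_atTop_zero.comp hφ.tendsto_atTop)).const_mul C)) fun r => hnear (φ r)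
  exact tendsto_of_antitone_dist_of_subseq (by simpa only [dist_eq_norm] using hanti) (hym ▸ hy)

end InnerProductSpace

theorem algorithm1_strong_convergence_version2_general
    {X : Type*} [NormedAddCommGroup X] [InnerProductSpace ℝ X] [CompleteSpace X]
    {k : ℕ} (M : Fin k → Submodule ℝ X) [∀ l, CompleteSpace (M l)]
    [CompleteSpace (⨅ l, M l : Submodule ℝ X)]
    (l : ℕ → Fin k) (x xt a : ℕ → X) (J : ℕ → Finset ℕ)
    (hxt : ∀ i, xt i = (Submodule.orthogonalProjectionOnto (M (l i)) (x i) : X))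
    (ha : ∀ i, a i = x i - xt i)
    -- `x_{i+1}` is the orthogonal projection of `x̃_i` onto
    -- `H̃_i = ⋂_{j ∈ J_i} {y : ⟪a_j, y⟫ = 0}`:
    (hstep : ∀ i,
      (∀ j ∈ J i, ⟪a j, x (i + 1)⟫ = 0) ∧
      ∀ y : X, (∀ j ∈ J i, ⟪a j, y⟫ = 0) → ‖xt i - x (i + 1)‖ ≤ ‖xt i - y‖)
    -- condition (A):
    (hA : ∃ pbar : ℕ, ∀ lidx : Fin k, ∀ i, 0 < i →
      ∃ p ≤ pbar, l (i + p) = lidx)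
    -- condition (B′):
    (hB' : ∃ (vt v : ℕ → Fin k → X) (K : ℝ),
      (∀ i lidx, vt i lidx ∈ (M lidx)ᗮ ∧ v i lidx ∈ (M lidx)ᗮ) ∧
      (∀ i, x i - xt i = ∑ lidx, vt i lidx) ∧
      (∀ i, xt i - x (i + 1) = ∑ lidx, v i lidx) ∧
      (∀ i, ∑ lidx, (‖vt i lidx‖ ^ 2 + ‖v i lidx‖ ^ 2) ≤
        K * (‖x i - xt i‖ ^ 2 + ‖xt i - x (i + 1)‖ ^ 2))) :
    Tendsto x atTop
      (nhds (Submodule.orthogonalProjectionOnto (⨅ l, M l : Submodule ℝ X) (x 0) : X)) := by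
  obtain ⟨pbar, hA⟩ := hA
  obtain ⟨vt, v, K, hperp, hvt, hv, hK⟩ := hB'
  set m := (Submodule.orthogonalProjectionOnto (⨅ l, M l : Submodule ℝ X) (x 0) : X)
  have hm : m ∈ ⨅ l, M l := Submodule.coe_mem _
  have hmM : ∀ i, m ∈ M (l i) := fun i => Submodule.mem_iInf _ |>.1 hm (l i)
  have hxtM : ∀ i, xt i ∈ M (l i) := fun i => hxt i ▸ Submodule.coe_mem _
  have hxxt : ∀ i, x i - xt i ∈ (M (l i))ᗮ := fun i =>
    hxt i ▸ Submodule.sub_starProjection_mem_orthogonal (x i)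
  have hdesc : ∀ n, ‖x n - m‖ ^ 2 =
      ‖x n - xt n‖ ^ 2 + ‖xt n - x (n + 1)‖ ^ 2 + ‖x (n + 1) - m‖ ^ 2 := fun n =>
    norm_sub_sq_eq_of_projection_steps (M (l n)) a (J n) (hxtM n) (hxxt n) (hmM n)
      (fun j _ => ha j ▸ Submodule.inner_left_of_mem_orthogonal (hmM j) (hxxt j))
      (hstep n).1 (hstep n).2
  refine tendsto_of_fejer_of_orthogonal_increments M
    (fun l => (completeSpace_coe_iff_isComplete.1 inferInstance).isClosed) hm
    (Submodule.sub_starProjection_mem_orthogonal (x 0)) (fun n => by positivity)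
    (fun n => by linarith [hdesc n]) (fun n l => add_mem (hperp n l).1 (hperp n l).2)
    (fun n => by rw [← sub_add_sub_cancel (x n) (xt n), hvt, hv, ← sum_add_distrib])
    (fun n => sum_norm_add_le_sqrt_mul_sqrt _ _ (by positivity) (hK n)) (Real.sqrt_nonneg _)
    (pbar + 2) (exists_mem_norm_sub_le_of_visits (fun l => (M l : Set X)) hxtM
      (exists_add_lt_add_two_eq hA))

/-- Strong convergence of Algorithm 1, Version 2: in Algorithm 1
(`x̃_i = P_{M_{l_i}} x_i`, `a_i = x_i - x̃_i`, `H_i = {x : ⟪a_i, x⟫ = 0}`,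
`i ∈ J_i ⊆ {0,…,i}`, `H̃_i = ⋂_{j ∈ J_i} H_j`, `x_{i+1} = P_{H̃_i}(x̃_i)`),
assume (A) there is `p̄` such that for every `l` and every `i > 0` there is
`p_i^l ∈ [0, p̄]` with `l_{i+p_i^l} = l`, and (B′) there are decompositions
`x_i - x̃_i = ∑_l ṽ_{i,l}` and `x̃_i - x_{i+1} = ∑_l v_{i,l}` with
`ṽ_{i,l}, v_{i,l} ∈ (M l)ᗮ` and a constant `K` with
`∑_l (‖ṽ_{i,l}‖² + ‖v_{i,l}‖²) ≤ K (‖x_i - x̃_i‖² + ‖x̃_i - x_{i+1}‖²)` for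
all `i`.  Then `x_i → P_M(x_0)` strongly, where `M = ⨅ l, M l`. -/
theorem algorithm1_strong_convergence_version2
    {X : Type*} [NormedAddCommGroup X] [InnerProductSpace ℝ X] [CompleteSpace X]
    {k : ℕ} (M : Fin k → Submodule ℝ X) [∀ l, CompleteSpace (M l)]
    [CompleteSpace (⨅ l, M l : Submodule ℝ X)]
    (l : ℕ → Fin k) (x xt a : ℕ → X) (J : ℕ → Finset ℕ)
    (hxt : ∀ i, xt i = (Submodule.orthogonalProjectionOnto (M (l i)) (x i) : X))
    (ha : ∀ i, a i = x i - xt i)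
    (hJ : ∀ i, i ∈ J i ∧ ∀ j ∈ J i, j ≤ i)
    -- `x_{i+1}` is the orthogonal projection of `x̃_i` onto
    -- `H̃_i = ⋂_{j ∈ J_i} {y : ⟪a_j, y⟫ = 0}`:
    (hstep : ∀ i,
      (∀ j ∈ J i, ⟪a j, x (i + 1)⟫ = 0) ∧
      ∀ y : X, (∀ j ∈ J i, ⟪a j, y⟫ = 0) → ‖xt i - x (i + 1)‖ ≤ ‖xt i - y‖)
    -- condition (A):
    (hA : ∃ pbar : ℕ, ∀ lidx : Fin k, ∀ i, 0 < i →
      ∃ p ≤ pbar, l (i + p) = lidx)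
    -- condition (B′):
    (hB' : ∃ (vt v : ℕ → Fin k → X) (K : ℝ),
      (∀ i lidx, vt i lidx ∈ (M lidx)ᗮ ∧ v i lidx ∈ (M lidx)ᗮ) ∧
      (∀ i, x i - xt i = ∑ lidx, vt i lidx) ∧
      (∀ i, xt i - x (i + 1) = ∑ lidx, v i lidx) ∧
      (∀ i, ∑ lidx, (‖vt i lidx‖ ^ 2 + ‖v i lidx‖ ^ 2) ≤
        K * (‖x i - xt i‖ ^ 2 + ‖xt i - x (i + 1)‖ ^ 2))) :
    Tendsto x atTop
      (nhds (Submodule.orthogonalProjectionOnto (⨅ l, M l : Submodule ℝ X) (x 0) : X)) :=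
  algorithm1_strong_convergence_version2_general M l x xt a J hxt ha hstep hA hB'
end

section
/- Consider Algorithm 1: let M_1,...,M_k be closed linear subspaces of a real Hilbert space X and x_0 ∈ X. For each i ≥ 0 choose l_i ∈ {1,...,k}, set x̃_i := P_{M_{l_i}}(x_i), a_i := x_i − x̃_i, and H_i := {x ∈ X : ⟨a_i, x⟩ = 0}; choose J_i ⊆ {0,1,...,i} with i ∈ J_i, set H̃_i := ⋂_{j∈J_i} H_j, and x_{i+1} := P_{H̃_i}(x̃_i). If for every i the vector x_0 − x_i lies in the linear span of {a_j : j ∈ J_i} (condition (B)), then ⟨x_0 − x_i, x_i⟩ = 0 for all i > 0. -/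
/-!
Write `x₀ - x_{m+1} = (x₀ - x_m) + a_m + (x̃_m - x_{m+1})` and let `H̃_m = (span {a_j : j ∈ J_m})ᗮ`,
which contains `x_{m+1}`. Each summand is orthogonal to `x_{m+1}`: the first lies in
`span {a_j : j ∈ J_m}` by condition (B), the second because `m ∈ J_m`, and the third because
`x_{m+1}` is the best approximation of `x̃_m` in the subspace `H̃_m`, so `x̃_m - x_{m+1} ⊥ H̃_m`.
-/

open scoped RealInnerProductSpace InnerProductSpace

namespace Submodule

theorem mem_orthogonal_span_iff {𝕜 E : Type*} [RCLike 𝕜] [NormedAddCommGroup E]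
    [InnerProductSpace 𝕜 E] {s : Set E} {v : E} :
    v ∈ (span 𝕜 s)ᗮ ↔ ∀ u ∈ s, ⟪u, v⟫_𝕜 = 0 := by
  rw [← span_singleton_le_iff_mem, ← isOrtho_iff_le, isOrtho_comm, isOrtho_span]
  simp

theorem inner_sub_eq_zero_of_forall_norm_sub_le {X : Type*} [NormedAddCommGroup X]
    [InnerProductSpace ℝ X] {K : Submodule ℝ X} {u v : X} (hv : v ∈ K)
    (hmin : ∀ w ∈ K, ‖u - v‖ ≤ ‖u - w‖) : ∀ w ∈ K, ⟪u - v, w⟫ = 0 := by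
  refine (K.norm_eq_iInf_iff_real_inner_eq_zero hv).1 (le_antisymm ?_ ?_)
  · exact le_ciInf fun w => hmin w w.2
  · exact ciInf_le ⟨0, Set.forall_mem_range.2 fun _ => norm_nonneg _⟩ (⟨v, hv⟩ : (K : Set X))

end Submodule

theorem algorithm1_condition_B_inner_zero_general
    {X : Type*} [NormedAddCommGroup X] [InnerProductSpace ℝ X]
    (x xt a : ℕ → X) (J : ℕ → Finset ℕ)
    (ha : ∀ i, a i = x i - xt i)
    (hJ : ∀ i, i ∈ J i ∧ ∀ j ∈ J i, j ≤ i)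
    -- `x_{i+1}` is the orthogonal projection of `x̃_i` onto
    -- `H̃_i = ⋂_{j ∈ J_i} {y : ⟪a_j, y⟫ = 0}`:
    (hstep : ∀ i,
      (∀ j ∈ J i, ⟪a j, x (i + 1)⟫ = 0) ∧
      ∀ y : X, (∀ j ∈ J i, ⟪a j, y⟫ = 0) → ‖xt i - x (i + 1)‖ ≤ ‖xt i - y‖)
    -- condition (B):
    (hB : ∀ i, x 0 - x i ∈ Submodule.span ℝ (a '' (J i : Set ℕ))) :
    ∀ i, 0 < i → ⟪x 0 - x i, x i⟫ = 0 := by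
  rintro _ hi
  obtain ⟨m, rfl⟩ := Nat.exists_eq_add_one_of_ne_zero hi.ne'
  let H : Submodule ℝ X := (Submodule.span ℝ (a '' (J m : Set ℕ)))ᗮ
  have mem_H : ∀ y, y ∈ H ↔ ∀ j ∈ J m, ⟪a j, y⟫ = 0 := by
    simp [H, Submodule.mem_orthogonal_span_iff]
  have hx : x (m + 1) ∈ H := (mem_H _).2 (hstep m).1
  have h_span : ⟪x 0 - x m, x (m + 1)⟫ = 0 := Submodule.inner_right_of_mem_orthogonal (hB m) hx
  have h_a : ⟪a m, x (m + 1)⟫ = 0 := (hstep m).1 m (hJ m).1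
  have h_proj : ⟪xt m - x (m + 1), x (m + 1)⟫ = 0 :=
    Submodule.inner_sub_eq_zero_of_forall_norm_sub_le hx
      (fun y hy => (hstep m).2 y ((mem_H y).1 hy)) _ hx
  calc ⟪x 0 - x (m + 1), x (m + 1)⟫
      = ⟪x 0 - x m, x (m + 1)⟫ + ⟪a m, x (m + 1)⟫ + ⟪xt m - x (m + 1), x (m + 1)⟫ := by
        rw [← inner_add_left, ← inner_add_left, ha]
        congr 1
        abel
    _ = 0 := by rw [h_span, h_a, h_proj, add_zero, add_zero]

/-- in Algorithm 1 (`x̃_i = P_{M_{l_i}} x_i`, `a_i = x_i - x̃_i`,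
`H_i = {x : ⟪a_i, x⟫ = 0}`, `i ∈ J_i ⊆ {0,…,i}`, `H̃_i = ⋂_{j ∈ J_i} H_j`,
`x_{i+1} = P_{H̃_i}(x̃_i)`), if condition (B) holds, i.e. `x_0 - x_i` lies in
the span of `{a_j : j ∈ J_i}` for every `i`, then `⟪x_0 - x_i, x_i⟫ = 0` for
all `i > 0`. -/
theorem algorithm1_condition_B_inner_zero
    {X : Type*} [NormedAddCommGroup X] [InnerProductSpace ℝ X] [CompleteSpace X]
    {k : ℕ} (M : Fin k → Submodule ℝ X) [∀ l, CompleteSpace (M l)]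
    (l : ℕ → Fin k) (x xt a : ℕ → X) (J : ℕ → Finset ℕ)
    (hxt : ∀ i, xt i = ((M (l i)).orthogonalProjectionOnto (x i) : X))
    (ha : ∀ i, a i = x i - xt i)
    (hJ : ∀ i, i ∈ J i ∧ ∀ j ∈ J i, j ≤ i)
    -- `x_{i+1}` is the orthogonal projection of `x̃_i` onto
    -- `H̃_i = ⋂_{j ∈ J_i} {y : ⟪a_j, y⟫ = 0}`:
    (hstep : ∀ i,
      (∀ j ∈ J i, ⟪a j, x (i + 1)⟫ = 0) ∧
      ∀ y : X, (∀ j ∈ J i, ⟪a j, y⟫ = 0) → ‖xt i - x (i + 1)‖ ≤ ‖xt i - y‖)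
    -- condition (B):
    (hB : ∀ i, x 0 - x i ∈ Submodule.span ℝ (a '' (J i : Set ℕ))) :
    ∀ i, 0 < i → ⟪x 0 - x i, x i⟫ = 0 :=
  algorithm1_condition_B_inner_zero_general x xt a J ha hJ hstep hB
end
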